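/- arXiv:2201.02888 — 10 statements merged into one kernel-verified Lean document; each statement's English description precedes it below -/
import Mathlib

section
/- Let X be a nontrivial Polish topological vector space over ℝ and let A ⊆ X be a subset that is not Haar-thin in X. Then A belongs to the Kuczma–Ger class 𝓒_X, i.e., every additive function f : X → ℝ whose image f[A] is a bounded subset of ℝ is continuous. -/
open Set Filter Topology Pointwise MeasureTheory

/-- A Borel set `A` in a topological Abelian group is *Haar-meager* if there is a continuous
map `f` from the Cantor cube `ℕ → Bool` such that `f ⁻¹' (A + x)` is meager for every `x`. -/
def HaarMeager {X : Type*} [TopologicalSpace X] [AddCommGroup X] (A : Set X) : Prop :=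
  ∃ f : (ℕ → Bool) → X, Continuous f ∧ ∀ x : X, IsMeagre (f ⁻¹' ((fun a => a + x) '' A))

/-- A set `A` is *Haar-null* if there is a Borel probability measure `μ` on `X` such that
`μ (A + x) = 0` for every `x ∈ X`. -/
def HaarNull {X : Type*} [MeasurableSpace X] [AddCommGroup X] (A : Set X) : Prop :=
  ∃ μ : Measure X, IsProbabilityMeasure μ ∧ ∀ x : X, μ ((fun a => a + x) '' A) = 0

/-- A subset `T` of the Cantor cube is *thin* if for every coordinate `n`, any two elements
of `T` agreeing at all coordinates except possibly `n` are equal. -/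
def IsThinSet (T : Set (ℕ → Bool)) : Prop :=
  ∀ n : ℕ, ∀ s ∈ T, ∀ t ∈ T, (∀ m : ℕ, m ≠ n → s m = t m) → s = t

/-- A set `A` is *Haar-thin* if there is a continuous map `f` from the Cantor cube such that
`f ⁻¹' (A + x)` is thin for every `x`. -/
def HaarThin {X : Type*} [TopologicalSpace X] [AddCommGroup X] (A : Set X) : Prop :=
  ∃ f : (ℕ → Bool) → X, Continuous f ∧ ∀ x : X, IsThinSet (f ⁻¹' ((fun a => a + x) '' A))

/-- A set `A` is *null-finite* if there is a null sequence `(x n)` such that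
`{n | x n + y ∈ A}` is finite for every `y`. -/
def NullFinite {X : Type*} [TopologicalSpace X] [AddCommGroup X] (A : Set X) : Prop :=
  ∃ x : ℕ → X, Tendsto x atTop (nhds 0) ∧ ∀ y : X, {n : ℕ | x n + y ∈ A}.Finite

/-- A set `A` is *Haar-open* if for every compact `K` and `p ∈ K` there is `x` such that
`K ∩ (A + x)` is a neighborhood of `p` in the subspace `K`. -/
def HaarOpen {X : Type*} [TopologicalSpace X] [AddCommGroup X] (A : Set X) : Prop :=
  ∀ K : Set X, IsCompact K → ∀ p ∈ K, ∃ x : X,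
    K ∩ ((fun a => a + x) '' A) ∈ nhdsWithin p K

/-!
If `A - A` is not a neighbourhood of `0`, choose `e n ∉ A - A` inductively, each so small
(for a complete metric) compared with the finitely many sums of earlier terms that
`s ↦ ∑ₙ s n • e n` converges uniformly to a continuous map on the Cantor cube. Two points of
the cube differing only at `n` are sent to points differing by `± e n ∉ A - A`, so every
translate of `A` pulls back to a thin set. Hence `A - A` is a neighbourhood of `0`, and an
additive `f` bounded on `A` is bounded there; an additive map bounded near `0` is continuous,
because `|f x| ≤ M / n` as soon as `n • x` lies in the neighbourhood.
-/

theorem AddMonoidHom.continuous_of_isBounded_image_nhds_zero {G : Type*} [TopologicalSpace G]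
    [AddGroup G] [IsTopologicalAddGroup G] (φ : G →+ ℝ) {U : Set G} (hU : U ∈ 𝓝 0)
    (hφU : Bornology.IsBounded (φ '' U)) : Continuous φ := by
  refine continuous_of_continuousAt_zero φ ?_
  obtain ⟨C, hC⟩ := isBounded_iff_forall_norm_le.1 hφU
  rw [ContinuousAt, map_zero, Metric.tendsto_nhds]
  intro ε hε
  obtain ⟨n, hn⟩ := exists_nat_gt (C / ε)
  have hnU : ∀ᶠ x in 𝓝 (0 : G), n • x ∈ U :=
    (continuous_nsmul n).tendsto' 0 0 (nsmul_zero n) hU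
  filter_upwards [hnU] with x hx
  have hle : n * |φ x| ≤ C := by
    simpa [abs_mul] using hC _ (mem_image_of_mem φ hx)
  rw [Real.dist_0_eq_abs]
  exact lt_of_mul_lt_mul_left (hle.trans_lt ((div_lt_iff₀ hε).1 hn)) n.cast_nonneg

section CantorPartialSum

variable {X : Type*} [AddCommMonoid X]

def cantorPartialSum (e : ℕ → X) (N : ℕ) (s : ℕ → Bool) : X :=
  ∑ k ∈ Finset.range N, if s k then e k else 0

theorem cantorPartialSum_succ (e : ℕ → X) (N : ℕ) (s : ℕ → Bool) :
    cantorPartialSum e (N + 1) s = cantorPartialSum e N s + if s N then e N else 0 :=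
  Finset.sum_range_succ _ _

theorem cantorPartialSum_congr {e u : ℕ → X} {N : ℕ} (h : ∀ k < N, u k = e k) :
    cantorPartialSum u N = cantorPartialSum e N :=
  funext fun _ => Finset.sum_congr rfl fun k hk => by rw [h k (Finset.mem_range.1 hk)]

theorem finite_range_cantorPartialSum (e : ℕ → X) (N : ℕ) :
    (range (cantorPartialSum e N)).Finite := by
  refine ((Finset.range N).powerset.finite_toSet.image fun T => ∑ k ∈ T, e k).subset ?_
  rintro _ ⟨s, rfl⟩
  exact ⟨(Finset.range N).filter (s ·), Finset.mem_powerset.2 (Finset.filter_subset _ _),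
    Finset.sum_filter _ _⟩

theorem continuous_cantorPartialSum [TopologicalSpace X] [ContinuousAdd X] (e : ℕ → X)
    (N : ℕ) : Continuous (cantorPartialSum e N) :=
  continuous_finsetSum _ fun k _ =>
    (continuous_of_discreteTopology (f := fun b : Bool => if b then e k else 0)).comp
      (continuous_apply k)

theorem cantorPartialSum_eq_add {e : ℕ → X} {n N : ℕ} {s t : ℕ → Bool}
    (hst : ∀ m ≠ n, s m = t m) (hs : s n = true) (ht : t n = false) (hn : n < N) :
    cantorPartialSum e N s = cantorPartialSum e N t + e n := by
  unfold cantorPartialSum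
  rw [← Finset.add_sum_erase _ _ (Finset.mem_range.2 hn),
    ← Finset.add_sum_erase _ _ (Finset.mem_range.2 hn), hs, ht, if_pos rfl,
    if_neg Bool.false_ne_true, zero_add, add_comm]
  exact congrArg (· + e n) <|
    Finset.sum_congr rfl fun k hk => by rw [hst k (Finset.ne_of_mem_erase hk)]

theorem eq_add_of_tendsto_cantorPartialSum [TopologicalSpace X] [T2Space X] [ContinuousAdd X]
    {e : ℕ → X} {F : (ℕ → Bool) → X}
    (hF : ∀ s, Tendsto (fun N => cantorPartialSum e N s) atTop (𝓝 (F s)))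
    {n : ℕ} {s t : ℕ → Bool} (hst : ∀ m ≠ n, s m = t m) (hs : s n = true)
    (ht : t n = false) : F s = F t + e n :=
  tendsto_nhds_unique (hF s) <| ((hF t).add_const (e n)).congr' <|
    (eventually_gt_atTop n).mono fun _ hN => (cantorPartialSum_eq_add hst hs ht hN).symm

end CantorPartialSum

section PseudoMetric

variable {X : Type*} [PseudoMetricSpace X] [AddCommMonoid X] [ContinuousAdd X]

theorem exists_notMem_forall_dist_add_lt {S : Set X} (hS : S ∉ 𝓝 0) {Q : Set X}
    (hQ : Q.Finite) {ε : ℝ} (hε : 0 < ε) : ∃ z ∉ S, ∀ q ∈ Q, dist (q + z) q < ε := by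
  have hV : ∀ᶠ z in 𝓝 (0 : X), ∀ q ∈ Q, dist (q + z) q < ε := by
    refine (eventually_all_finite hQ).2 fun q _ => ?_
    have hq : Tendsto (fun z => dist (q + z) q) (𝓝 0) (𝓝 0) := by
      simpa using (show Continuous fun z => dist (q + z) q by fun_prop).tendsto 0
    exact hq.eventually_lt_const hε
  obtain ⟨z, hzV, hzS⟩ := not_subset.1 fun h => hS (mem_of_superset hV h)
  exact ⟨z, hzS, hzV⟩

def seqOfHistory {Y : Type*} [Zero Y] (g : ℕ → (ℕ → Y) → Y) (n : ℕ) : Y :=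
  g n fun k => if k < n then seqOfHistory g k else 0

theorem exists_seq_notMem_dist_cantorPartialSum_add_lt {S : Set X} (hS : S ∉ 𝓝 0) :
    ∃ e : ℕ → X, (∀ n, e n ∉ S) ∧
      ∀ N s, dist (cantorPartialSum e N s + e N) (cantorPartialSum e N s) < (1 / 2) ^ N := by
  choose g hgS hg using fun N (u : ℕ → X) =>
    exists_notMem_forall_dist_add_lt hS (finite_range_cantorPartialSum u N)
      (by positivity : (0 : ℝ) < (1 / 2) ^ N)
  refine ⟨seqOfHistory g, fun n => ?_, fun N s => ?_⟩
  · rw [seqOfHistory]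
    exact hgS _ _
  · have hN : seqOfHistory g N = g N fun k => if k < N then seqOfHistory g k else 0 := by
      rw [seqOfHistory]
    rw [hN, ← cantorPartialSum_congr fun k hk => if_pos hk]
    exact hg _ _ _ (mem_range_self s)

theorem exists_continuous_tendsto_cantorPartialSum [CompleteSpace X] {e : ℕ → X}
    (he : ∀ N s, dist (cantorPartialSum e N s + e N) (cantorPartialSum e N s) < (1 / 2) ^ N) :
    ∃ F : (ℕ → Bool) → X, Continuous F ∧
      ∀ s, Tendsto (fun N => cantorPartialSum e N s) atTop (𝓝 (F s)) := by
  have hstep : ∀ s N, dist (cantorPartialSum e N s) (cantorPartialSum e (N + 1) s)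
      ≤ 1 * (1 / 2 : ℝ) ^ N := by
    intro s N
    rw [cantorPartialSum_succ, one_mul, dist_comm]
    split_ifs
    · exact (he N s).le
    · rw [add_zero, dist_self]
      positivity
  choose F hF using fun s =>
    cauchySeq_tendsto_of_complete (cauchySeq_of_le_geometric _ _ (by norm_num) (hstep s))
  have hbound : Tendsto (fun N : ℕ => 1 * (1 / 2 : ℝ) ^ N / (1 - 1 / 2)) atTop (𝓝 0) := by
    simpa using (tendsto_pow_atTop_nhds_zero_of_lt_one (by norm_num : (0 : ℝ) ≤ 1 / 2)
      (by norm_num)).div_const (1 - 1 / 2)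
  have hunif : TendstoUniformly (cantorPartialSum e) F atTop := by
    rw [Metric.tendstoUniformly_iff]
    intro ε hε
    filter_upwards [hbound.eventually_lt_const hε] with N hN s
    rw [dist_comm]
    exact (dist_le_of_le_geometric_of_tendsto _ _ (by norm_num) (hstep s) (hF s) N).trans_lt hN
  exact ⟨F, hunif.continuous (.of_forall (continuous_cantorPartialSum e)), hF⟩

end PseudoMetric

theorem haarThin_of_eq_add {X : Type*} [TopologicalSpace X] [AddCommGroup X] {A : Set X}
    {e : ℕ → X} (he : ∀ n, e n ∉ A - A) {F : (ℕ → Bool) → X} (hF : Continuous F)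
    (hFe : ∀ n s t, (∀ m ≠ n, s m = t m) → s n = true → t n = false → F s = F t + e n) :
    HaarThin A := by
  refine ⟨F, hF, fun x n s ⟨a, ha, hax⟩ t ⟨b, hb, hbx⟩ hst => ?_⟩
  have hdiff : ∀ {s t a b}, a ∈ A → b ∈ A → a + x = F s → b + x = F t →
      (∀ m ≠ n, s m = t m) → s n = true → t n = false → False :=
    fun ha hb hax hbx hst hs ht => he n ⟨_, ha, _, hb, by
      change _ - _ = _
      rw [← add_sub_add_right_eq_sub _ _ x, hax, hbx, hFe n _ _ hst hs ht, add_sub_cancel_left]⟩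
  funext m
  by_cases hm : m = n
  · subst hm
    cases hs : s m <;> cases ht : t m
    · rfl
    · exact (hdiff hb ha hbx hax (fun k hk => (hst k hk).symm) ht hs).elim
    · exact (hdiff ha hb hax hbx hst hs ht).elim
    · rfl
  · exact hst m hm

theorem sub_mem_nhds_zero_of_not_haarThin {X : Type*} [TopologicalSpace X] [AddCommGroup X]
    [IsTopologicalAddGroup X] [PolishSpace X] {A : Set X} (hA : ¬ HaarThin A) :
    A - A ∈ 𝓝 0 := by
  by_contra hAA
  let := TopologicalSpace.upgradeIsCompletelyMetrizable X
  obtain ⟨e, heA, he⟩ := exists_seq_notMem_dist_cantorPartialSum_add_lt hAA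
  obtain ⟨F, hFc, hF⟩ := exists_continuous_tendsto_cantorPartialSum he
  exact hA <| haarThin_of_eq_add heA hFc fun _ _ _ hst hs ht =>
    eq_add_of_tendsto_cantorPartialSum hF hst hs ht

theorem statement3_general {X : Type*} [TopologicalSpace X] [AddCommGroup X]
    [IsTopologicalAddGroup X] [PolishSpace X]
    (A : Set X) (hA : ¬ HaarThin A)
    (f : X → ℝ) (hadd : ∀ x y : X, f (x + y) = f x + f y)
    (hbdd : Bornology.IsBounded (f '' A)) :
    Continuous f := by
  let φ : X →+ ℝ := AddMonoidHom.mk' f hadd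
  have hφ : φ '' (A - A) = f '' A - f '' A := image_sub φ
  exact φ.continuous_of_isBounded_image_nhds_zero (sub_mem_nhds_zero_of_not_haarThin hA)
    (hφ ▸ isBounded_sub hbdd hbdd)

/-- In a nontrivial Polish topological vector space `X`, every set `A` that is not Haar-thin
belongs to the Kuczma–Ger class `𝓒_X`: every additive `f : X → ℝ` with `f '' A` bounded is
continuous. -/
theorem statement3 {X : Type*} [TopologicalSpace X] [AddCommGroup X] [Module ℝ X]
    [IsTopologicalAddGroup X] [ContinuousSMul ℝ X] [PolishSpace X] [Nontrivial X]
    (A : Set X) (hA : ¬ HaarThin A)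
    (f : X → ℝ) (hadd : ∀ x y : X, f (x + y) = f x + f y)
    (hbdd : Bornology.IsBounded (f '' A)) :
    Continuous f :=
  statement3_general A hA f hadd hbdd
end

section
/- Let X be a nontrivial topological vector space over ℝ and let f : X → ℝ be a discontinuous additive function. Then the set T = {x ∈ X : f(x) ≥ 0} satisfies T − T = X (so T − T is a neighborhood of zero), yet T does not belong to the Kuczma–Ger class 𝓑_X: the additive function −f is discontinuous and satisfies sup (−f)[T] ≤ 0 < ∞. -/
open Set Filter Pointwise

theorem sub_eq_univ_of_zero_mem_of_forall_or_neg_mem {G : Type*} [AddGroup G] {T : Set G}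
    (h0 : 0 ∈ T) (hT : ∀ x, x ∈ T ∨ -x ∈ T) : T - T = univ := by
  refine eq_univ_of_forall fun x => ?_
  rcases hT x with hx | hx
  · exact ⟨x, hx, 0, h0, sub_zero x⟩
  · exact ⟨0, h0, -x, hx, by simp⟩

theorem AddMonoidHom.nonneg_sub_nonneg_eq_univ {G R : Type*} [AddGroup G] [AddCommGroup R]
    [LinearOrder R] [IsOrderedAddMonoid R] (g : G →+ R) :
    {x | 0 ≤ g x} - {x | 0 ≤ g x} = univ :=
  sub_eq_univ_of_zero_mem_of_forall_or_neg_mem (by simp) fun x =>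
    (le_total 0 (g x)).imp (fun hx => hx) fun hx => by simpa using hx

theorem statement4_general {X : Type*} [TopologicalSpace X] [AddCommGroup X]
    (f : X → ℝ) (hadd : ∀ x y : X, f (x + y) = f x + f y) (hdisc : ¬ Continuous f) :
    {x : X | 0 ≤ f x} - {x : X | 0 ≤ f x} = Set.univ ∧
    {x : X | 0 ≤ f x} - {x : X | 0 ≤ f x} ∈ nhds (0 : X) ∧
    (∀ x y : X, (-f) (x + y) = (-f) x + (-f) y) ∧
    ¬ Continuous (-f) ∧
    (∀ x ∈ {x : X | 0 ≤ f x}, (-f) x ≤ 0) := by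
  have huniv := (AddMonoidHom.mk' f hadd).nonneg_sub_nonneg_eq_univ
  refine ⟨huniv, huniv ▸ univ_mem, fun x y => ?_, fun h => hdisc ?_, fun x hx => ?_⟩
  · simp only [Pi.neg_apply, hadd, neg_add]
  · simpa using h.neg
  · simpa using hx

/-- If `f` is a discontinuous additive functional on a nontrivial topological vector space,
then `T = {x | f x ≥ 0}` satisfies `T - T = X` (so `T - T` is a neighborhood of zero), yet
`T ∉ 𝓑_X`: the additive functional `-f` is discontinuous and `sup (-f)[T] ≤ 0 < ∞`. -/
theorem statement4 {X : Type*} [TopologicalSpace X] [AddCommGroup X] [Module ℝ X]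
    [IsTopologicalAddGroup X] [ContinuousSMul ℝ X] [Nontrivial X]
    (f : X → ℝ) (hadd : ∀ x y : X, f (x + y) = f x + f y) (hdisc : ¬ Continuous f) :
    {x : X | 0 ≤ f x} - {x : X | 0 ≤ f x} = Set.univ ∧
    {x : X | 0 ≤ f x} - {x : X | 0 ≤ f x} ∈ nhds (0 : X) ∧
    (∀ x y : X, (-f) (x + y) = (-f) x + (-f) y) ∧
    ¬ Continuous (-f) ∧
    (∀ x ∈ {x : X | 0 ≤ f x}, (-f) x ≤ 0) :=
  statement4_general f hadd hdisc
end

section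
/- Let X be a topological vector space over ℝ and let f : X → ℝ be a discontinuous additive function. Then the set T = {x ∈ X : f(x) ≤ 0} belongs to the Kuczma–Ger class 𝓒_X but not to the class 𝓑_X; that is: (1) every additive function g : X → ℝ whose image g[T] is a bounded subset of ℝ is continuous, and (2) there exists an additive function h : X → ℝ (namely h = f) with sup h[T] ≤ 0 < ∞ which is discontinuous. In particular 𝓑_X ≠ 𝓒_X. -/
/-!
`T = {f ≤ 0}` is closed under multiplication by natural numbers, so for `x ∈ T` the bounded
set `g '' T` contains every `n • g x`, which forces `g x = 0` (Archimedes). Since `X = T ∪ -T`,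
an additive `g` bounded on `T` vanishes identically, and is in particular continuous.
-/

theorem eq_zero_of_forall_abs_nsmul_le {α : Type*} [AddCommGroup α] [LinearOrder α]
    [IsOrderedAddMonoid α] [Archimedean α] {a C : α} (h : ∀ n : ℕ, |n • a| ≤ C) :
    a = 0 := by
  by_contra ha
  obtain ⟨n, hn⟩ := Archimedean.arch C (abs_pos.2 ha)
  have hlt : C < (n + 1) • |a| := by
    rw [succ_nsmul]
    exact lt_add_of_le_of_pos hn (abs_pos.2 ha)
  have := h (n + 1)
  rw [abs_nsmul] at this
  exact absurd this (not_le.2 hlt)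

theorem AddMonoidHom.eq_zero_of_isBounded_image {M : Type*} [AddMonoid M] (g : M →+ ℝ)
    {S : Set M} (hS : ∀ n : ℕ, ∀ x ∈ S, n • x ∈ S) (hb : Bornology.IsBounded (g '' S)) :
    ∀ x ∈ S, g x = 0 := by
  obtain ⟨C, hC⟩ := isBounded_iff_forall_norm_le.mp hb
  intro x hx
  refine eq_zero_of_forall_abs_nsmul_le (C := C) fun n => ?_
  rw [← map_nsmul]
  exact hC _ ⟨n • x, hS n x hx, rfl⟩

theorem AddMonoidHom.eq_zero_of_isBounded_image_nonpos {G β : Type*} [AddGroup G]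
    [AddCommGroup β] [LinearOrder β] [IsOrderedAddMonoid β] (f : G →+ β) (g : G →+ ℝ)
    (hb : Bornology.IsBounded (g '' {x | f x ≤ 0})) : g = 0 := by
  have hT : ∀ x, f x ≤ 0 → g x = 0 := g.eq_zero_of_isBounded_image
    (fun n x (hx : f x ≤ 0) => show f (n • x) ≤ 0 by simpa using nsmul_nonpos hx n) hb
  ext x
  rcases le_total (f x) 0 with hx | hx
  · exact hT x hx
  · simpa using hT (-x) (by simpa using hx)

theorem statement5_general {X : Type*} [TopologicalSpace X] [AddCommGroup X]
    (f : X → ℝ) (hadd : ∀ x y : X, f (x + y) = f x + f y) (hdisc : ¬ Continuous f) :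
    (∀ g : X → ℝ, (∀ x y : X, g (x + y) = g x + g y) →
      Bornology.IsBounded (g '' {x : X | f x ≤ 0}) → Continuous g) ∧
    (∀ x ∈ {x : X | f x ≤ 0}, f x ≤ 0) ∧
    ¬ Continuous f := by
  refine ⟨fun g hg hb => ?_, fun x hx => hx, hdisc⟩
  have hg0 : AddMonoidHom.mk' g hg = 0 :=
    (AddMonoidHom.mk' f hadd).eq_zero_of_isBounded_image_nonpos _ hb
  have : g = 0 := congrArg DFunLike.coe hg0
  exact this ▸ continuous_zero

/-- If `f` is a discontinuous additive functional on a topological vector space `X`, then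
`T = {x | f x ≤ 0}` belongs to the Kuczma–Ger class `𝓒_X` but not to `𝓑_X`:
(1) every additive `g : X → ℝ` with `g '' T` bounded is continuous, and
(2) the additive function `f` itself is discontinuous although `sup f[T] ≤ 0 < ∞`. -/
theorem statement5 {X : Type*} [TopologicalSpace X] [AddCommGroup X] [Module ℝ X]
    [IsTopologicalAddGroup X] [ContinuousSMul ℝ X]
    (f : X → ℝ) (hadd : ∀ x y : X, f (x + y) = f x + f y) (hdisc : ¬ Continuous f) :
    (∀ g : X → ℝ, (∀ x y : X, g (x + y) = g x + g y) →
      Bornology.IsBounded (g '' {x : X | f x ≤ 0}) → Continuous g) ∧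
    (∀ x ∈ {x : X | f x ≤ 0}, f x ≤ 0) ∧
    ¬ Continuous f :=
  statement5_general f hadd hdisc
end

section
/- Let X be a topological vector space over ℝ and let f : X → ℝ be an additive function. If f is bounded above on some nonempty open subset U of X (i.e., sup f[U] < ∞), then f is continuous. -/
/-!
Translating the open set to a neighbourhood `V` of `0` keeps `f` bounded above there, say by `C`.
For `ε > 0` pick `n` with `C < n • ε`; by continuity of `x ↦ n • x`, eventually `n • x ∈ V`, and
then `n • f x = f (n • x) ≤ C < n • ε` forces `f x < ε`. Applied to `-f` on `-V` this gives the
lower bound, so `f` is continuous at `0`, hence everywhere.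
-/

open Set Filter Topology

namespace AddMonoidHom

variable {G H : Type*} [TopologicalSpace G] [AddGroup G] [IsTopologicalAddGroup G]
  [AddCommGroup H] [LinearOrder H] [IsOrderedAddMonoid H] [Archimedean H]

lemma eventually_lt_of_bddAbove_nhds_zero (f : G →+ H) {V : Set G} (hV : V ∈ 𝓝 0)
    (hbdd : BddAbove (f '' V)) {ε : H} (hε : 0 < ε) : ∀ᶠ x in 𝓝 0, f x < ε := by
  obtain ⟨C, hC⟩ := hbdd
  obtain ⟨n, hn⟩ := Archimedean.arch C hε
  have hC_lt : C < (n + 1) • ε :=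
    hn.trans_lt (by rw [succ_nsmul]; exact lt_add_of_pos_right _ hε)
  have hnV : ∀ᶠ x in 𝓝 0, (n + 1) • x ∈ V :=
    (continuous_nsmul (n + 1)).tendsto' 0 0 (nsmul_zero _) hV
  filter_upwards [hnV] with x hx
  refine lt_of_nsmul_lt_nsmul_right (n + 1) ?_
  rw [← map_nsmul]
  exact (hC (mem_image_of_mem f hx)).trans_lt hC_lt

variable [TopologicalSpace H] [OrderTopology H]

lemma continuous_of_bddAbove_nhds_zero (f : G →+ H) {V : Set G} (hV : V ∈ 𝓝 0)
    (hbdd : BddAbove (f '' V)) : Continuous f := by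
  have hbdd_neg : BddAbove ((-f) '' (-V)) := by
    obtain ⟨C, hC⟩ := hbdd
    refine ⟨C, ?_⟩
    rintro _ ⟨x, hx, rfl⟩
    simpa using hC (mem_image_of_mem f (mem_neg.1 hx))
  refine continuous_of_continuousAt_zero f ?_
  rw [ContinuousAt, map_zero]
  refine tendsto_order.2
    ⟨fun a ha => ?_, fun b hb => f.eventually_lt_of_bddAbove_nhds_zero hV hbdd hb⟩
  filter_upwards [(-f).eventually_lt_of_bddAbove_nhds_zero (neg_mem_nhds_zero G hV) hbdd_neg
    (neg_pos.2 ha)] with x hx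
  simpa using neg_lt.1 hx

lemma continuous_of_bddAbove_isOpen (f : G →+ H) {U : Set G} (hU : IsOpen U)
    (hne : U.Nonempty) (hbdd : BddAbove (f '' U)) : Continuous f := by
  obtain ⟨x₀, hx₀⟩ := hne
  have hV : (· + x₀) ⁻¹' U ∈ 𝓝 0 :=
    (hU.preimage (continuous_add_const x₀)).mem_nhds (by simpa using hx₀)
  refine f.continuous_of_bddAbove_nhds_zero hV ?_
  obtain ⟨M, hM⟩ := hbdd
  refine ⟨M - f x₀, ?_⟩
  rintro _ ⟨x, hx, rfl⟩
  have := hM (mem_image_of_mem f hx)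
  rw [map_add] at this
  exact le_sub_right_of_add_le this

end AddMonoidHom

theorem statement6_general {X : Type*} [TopologicalSpace X] [AddCommGroup X]
    [IsTopologicalAddGroup X]
    (f : X → ℝ) (hadd : ∀ x y : X, f (x + y) = f x + f y)
    (U : Set X) (hU : IsOpen U) (hne : U.Nonempty) (hbdd : BddAbove (f '' U)) :
    Continuous f :=
  (AddMonoidHom.mk' f hadd).continuous_of_bddAbove_isOpen hU hne hbdd

/-- An additive functional on a topological vector space over `ℝ` that is bounded above on
some nonempty open set is continuous. -/
theorem statement6 {X : Type*} [TopologicalSpace X] [AddCommGroup X] [Module ℝ X]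
    [IsTopologicalAddGroup X] [ContinuousSMul ℝ X]
    (f : X → ℝ) (hadd : ∀ x y : X, f (x + y) = f x + f y)
    (U : Set X) (hU : IsOpen U) (hne : U.Nonempty) (hbdd : BddAbove (f '' U)) :
    Continuous f :=
  statement6_general f hadd U hU hne hbdd
end

section
/- There exist a sequence (T_k)_{k∈ℕ} of pairwise disjoint thick subsets of ℝ and a strictly increasing sequence (Ξ_m)_{m∈ℕ} of positive integers with the following property: for all positive integers n ≤ m, all real numbers λ_1, …, λ_n with 1/m ≤ |λ_i| ≤ m for each i, all pairwise distinct indices k_1, …, k_n ∈ ℕ, and all points x_i ∈ T_{k_i} (i = 1, …, n) such that not all x_i lie in the interval [−Ξ_m, Ξ_m], one has |λ_1 x_1 + ⋯ + λ_n x_n| ≥ m + 1. -/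
open Set Filter Topology

def ThickSet (A : Set ℝ) : Prop :=
  ∀ K : Set ℝ, IsCompact K → ∃ x : ℝ, K ⊆ (fun a => x + a) '' A

namespace St7

def c : ℕ → ℕ
  | 0 => 1
  | s + 1 => (s + 1) ^ 3 * (c s + s + 1) + (s + 1) * (s + 2)

lemma c_pos (t : ℕ) : 0 < c t := by
  cases t with
  | zero => simp [c]
  | succ s => simp [c]

lemma c_step (s : ℕ) : c s + s + 1 ≤ c (s + 1) := by
  have h1 : 1 * (c s + s + 1) ≤ (s + 1) ^ 3 * (c s + s + 1) :=
    Nat.mul_le_mul (Nat.one_le_pow _ _ (by omega)) le_rfl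
  simp only [c]
  nlinarith [h1]

lemma c_mono : StrictMono c := by
  apply strictMono_nat_of_lt_succ
  intro t
  have := c_step t
  omega

lemma c_lt (s t : ℕ) (h : s < t) : c s + s < c t := by
  have h1 := c_step s
  have h2 : c (s + 1) ≤ c t := c_mono.monotone h
  omega

def B (t : ℕ) : Set ℝ := Icc (c t : ℝ) ((c t : ℝ) + t)

lemma B_disj {s t : ℕ} (h : s ≠ t) : Disjoint (B s) (B t) := by
  wlog hst : s < t generalizing s t
  · exact (this h.symm (by omega)).symm
  · rw [Set.disjoint_left]
    rintro a ⟨_, ha2⟩ ⟨hb1, _⟩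
    have := c_lt s t hst
    have : (c s : ℝ) + s < c t := by exact_mod_cast this
    linarith

def T (k : ℕ) : Set ℝ := ⋃ j, B (Nat.pair k j)

lemma T_disj : Pairwise fun i j => Disjoint (T i) (T j) := by
  intro a b hab
  rw [Set.disjoint_left]
  rintro y hy1 hy2
  simp only [T, mem_iUnion] at hy1 hy2
  obtain ⟨j1, h1⟩ := hy1
  obtain ⟨j2, h2⟩ := hy2
  have hne : Nat.pair a j1 ≠ Nat.pair b j2 := by
    intro h
    exact hab ((Nat.pair_eq_pair.mp h).1)
  exact (B_disj hne).le_bot ⟨h1, h2⟩ |>.elim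

lemma T_thick (k : ℕ) : ThickSet (T k) := by
  intro K hK
  obtain ⟨R, hR⟩ := hK.isBounded.subset_closedBall 0
  set R' : ℝ := max R 0 with hR'
  have hR'0 : 0 ≤ R' := le_max_right _ _
  set j : ℕ := ⌈2 * R'⌉₊ with hj
  set t : ℕ := Nat.pair k j with ht
  have hjt : (2 * R' : ℝ) ≤ t := by
    calc (2 * R' : ℝ) ≤ j := Nat.le_ceil _
    _ ≤ t := by exact_mod_cast Nat.right_le_pair k j
  refine ⟨-(c t) - R', fun y hy => ?_⟩
  have hy' : |y| ≤ R' := by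
    have := hR hy
    simp only [Metric.mem_closedBall, Real.dist_eq, sub_zero] at this
    exact this.trans (le_max_left _ _)
  rw [abs_le] at hy'
  refine ⟨y + c t + R', ?_, by ring⟩
  refine mem_iUnion.mpr ⟨j, ?_⟩
  simp only [B, Set.mem_Icc]
  constructor
  · linarith [hy'.1]
  · linarith [hy'.2, hjt]

lemma key (m s : ℕ) (hms : m ≤ s) :
    m ^ 3 * (c s + s + 1) + m * (m + 1) ≤ c (s + 1) := by
  simp only [c]
  have h1 : m ^ 3 ≤ (s + 1) ^ 3 := Nat.pow_le_pow_left (by omega) 3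
  have h2 : m * (m + 1) ≤ (s + 1) * (s + 2) := Nat.mul_le_mul (by omega) (by omega)
  nlinarith [Nat.mul_le_mul h1 (le_refl (c s + s + 1))]

lemma main (n m : ℕ) (hn : 0 < n) (hnm : n ≤ m)
    (l : Fin n → ℝ) (k : Fin n → ℕ) (x : Fin n → ℝ)
    (hl : ∀ i, 1 / (m : ℝ) ≤ |l i| ∧ |l i| ≤ m)
    (hk : Function.Injective k)
    (hx : ∀ i, x i ∈ T (k i))
    (hout : ¬ ∀ i, x i ∈ Icc (-((c m + m : ℕ) : ℝ)) ((c m + m : ℕ) : ℝ)) :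
    (m : ℝ) + 1 ≤ |∑ i, l i * x i| := by
  have hm : 1 ≤ m := hn.trans_le hnm
  have hmR : (1 : ℝ) ≤ m := by exact_mod_cast hm
  -- block indices
  have hx' : ∀ i, ∃ j, x i ∈ B (Nat.pair (k i) j) := fun i => mem_iUnion.mp (hx i)
  choose j hj using hx'
  set t : Fin n → ℕ := fun i => Nat.pair (k i) (j i) with htdef
  have ht_inj : Function.Injective t := by
    intro a b hab
    exact hk (Nat.pair_eq_pair.mp hab).1
  have hlb : ∀ i, (c (t i) : ℝ) ≤ x i := fun i => (hj i).1
  have hub : ∀ i, x i ≤ (c (t i) : ℝ) + t i := fun i => (hj i).2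
  have hxpos : ∀ i, (0 : ℝ) < x i := fun i =>
    lt_of_lt_of_le (by exact_mod_cast c_pos (t i)) (hlb i)
  -- some point escapes
  push_neg at hout
  obtain ⟨i₀, hi₀⟩ := hout
  have hesc : ((c m + m : ℕ) : ℝ) < x i₀ := by
    rcases not_and_or.mp (fun h => hi₀ ⟨h.1, h.2⟩) with h | h
    · push_neg at h
      have : (0 : ℝ) ≤ ((c m + m : ℕ) : ℝ) := by positivity
      linarith [hxpos i₀]
    · push_neg at h; exact h
  have hti₀ : m < t i₀ := by
    by_contra h
    push_neg at h
    have h1 : c (t i₀) + t i₀ ≤ c m + m :=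
      add_le_add (c_mono.monotone h) h
    have h2 : ((c (t i₀) + t i₀ : ℕ) : ℝ) ≤ ((c m + m : ℕ) : ℝ) := by exact_mod_cast h1
    push_cast at h2
    push_cast at hesc
    linarith [hub i₀, hesc]
  -- maximal block
  obtain ⟨iS, -, hiS⟩ := Finset.exists_max_image Finset.univ t ⟨⟨0, hn⟩, Finset.mem_univ _⟩
  have hmax : ∀ i, t i ≤ t iS := fun i => hiS i (Finset.mem_univ i)
  set s : ℕ := t iS - 1 with hs
  have htS : t iS = s + 1 := by
    have : m < t iS := lt_of_lt_of_le hti₀ (hmax i₀)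
    omega
  have hms : m ≤ s := by
    have : m < t iS := lt_of_lt_of_le hti₀ (hmax i₀)
    omega
  -- bound other terms
  have hother : ∀ i ∈ Finset.univ.erase iS, |l i * x i| ≤ (m : ℝ) * (c s + s) := by
    intro i hi
    have hne : i ≠ iS := Finset.ne_of_mem_erase hi
    have hti : t i < t iS := lt_of_le_of_ne (hmax i) (fun h => hne (ht_inj h))
    have hts : t i ≤ s := by omega
    have hb : (c (t i) : ℝ) + t i ≤ (c s : ℝ) + s := by
      have : c (t i) + t i ≤ c s + s := add_le_add (c_mono.monotone hts) hts
      exact_mod_cast this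
    rw [abs_mul, abs_of_pos (hxpos i)]
    have hxi : x i ≤ (c s : ℝ) + s := (hub i).trans hb
    have h0 : (0 : ℝ) ≤ (c s : ℝ) + s := by positivity
    exact mul_le_mul (hl i).2 hxi (hxpos i).le (by linarith [hmR])
  have hsum_other : |∑ i ∈ Finset.univ.erase iS, l i * x i| ≤ (m : ℝ) * ((m : ℝ) * (c s + s)) := by
    calc |∑ i ∈ Finset.univ.erase iS, l i * x i|
        ≤ ∑ i ∈ Finset.univ.erase iS, |l i * x i| := Finset.abs_sum_le_sum_abs _ _
      _ ≤ (Finset.univ.erase iS).card • ((m : ℝ) * (c s + s)) :=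
          Finset.sum_le_card_nsmul _ _ _ hother
      _ ≤ (m : ℝ) * ((m : ℝ) * (c s + s)) := by
          rw [nsmul_eq_mul]
          have hcard : ((Finset.univ.erase iS).card : ℝ) ≤ (m : ℝ) := by
            have : (Finset.univ.erase iS).card ≤ n := by
              simpa using Finset.card_erase_le (s := (Finset.univ : Finset (Fin n)))
            exact_mod_cast this.trans hnm
          have h0 : (0 : ℝ) ≤ (m : ℝ) * (c s + s) := by positivity
          exact mul_le_mul_of_nonneg_right hcard h0
  -- bound main term
  have hmain : (1 / m : ℝ) * (c (s + 1)) ≤ |l iS * x iS| := by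
    rw [abs_mul, abs_of_pos (hxpos iS)]
    have h1 : (c (s + 1) : ℝ) ≤ x iS := by rw [← htS]; exact hlb iS
    have h2 : (0 : ℝ) ≤ (c (s + 1) : ℝ) := by positivity
    exact mul_le_mul (hl iS).1 h1 h2 (abs_nonneg _)
  -- combine
  have hsplit : ∑ i, l i * x i = (∑ i ∈ Finset.univ.erase iS, l i * x i) + l iS * x iS :=
    (Finset.sum_erase_add _ _ (Finset.mem_univ iS)).symm
  have habs : |l iS * x iS| - |∑ i ∈ Finset.univ.erase iS, l i * x i| ≤ |∑ i, l i * x i| := by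
    have h := abs_sub_abs_le_abs_sub (l iS * x iS)
      (-(∑ i ∈ Finset.univ.erase iS, l i * x i))
    rw [abs_neg, sub_neg_eq_add, add_comm] at h
    rw [hsplit]
    exact h
  have hkey : ((m : ℝ)) ^ 3 * ((c s : ℝ) + s + 1) + m * (m + 1) ≤ (c (s + 1) : ℝ) := by
    exact_mod_cast key m s hms
  have hm0 : (0 : ℝ) < m := by linarith
  have hfin : (m : ℝ) + 1 + (m : ℝ) * ((m : ℝ) * (c s + s)) ≤ (1 / m : ℝ) * (c (s + 1)) := by
    rw [one_div, inv_mul_eq_div, le_div_iff₀ hm0]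
    nlinarith [hkey, hmR, sq_nonneg (m : ℝ)]
  linarith [habs, hsum_other, hmain, hfin]

end St7

/-- There are pairwise disjoint thick sets `(T k)` in `ℝ` and a strictly increasing sequence
`(Ξ m)` of positive integers such that for positive `n ≤ m`, coefficients `l i` with
`1/m ≤ |l i| ≤ m`, pairwise distinct indices `k i` and points `x i ∈ T (k i)` not all lying
in `[-Ξ m, Ξ m]`, one has `|∑ i, l i * x i| ≥ m + 1`. -/
theorem statement7 :
    ∃ T : ℕ → Set ℝ,
      (Pairwise fun i j => Disjoint (T i) (T j)) ∧
      (∀ k : ℕ, ThickSet (T k)) ∧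
      ∃ Ξ : ℕ → ℕ, StrictMono Ξ ∧ (∀ m : ℕ, 0 < Ξ m) ∧
        ∀ (n m : ℕ), 0 < n → n ≤ m →
          ∀ (l : Fin n → ℝ) (k : Fin n → ℕ) (x : Fin n → ℝ),
            (∀ i : Fin n, 1 / (m : ℝ) ≤ |l i| ∧ |l i| ≤ (m : ℝ)) →
            Function.Injective k →
            (∀ i : Fin n, x i ∈ T (k i)) →
            (¬ ∀ i : Fin n, x i ∈ Set.Icc (-(Ξ m : ℝ)) (Ξ m : ℝ)) →
            (m : ℝ) + 1 ≤ |∑ i : Fin n, l i * x i| := by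
  refine ⟨St7.T, St7.T_disj, St7.T_thick, fun m => St7.c m + m, ?_, ?_, ?_⟩
  · intro a b hab
    have := St7.c_mono hab
    dsimp only
    omega
  · intro m
    have := St7.c_pos m
    dsimp only
    omega
  · intro n m hn hnm l k x hl hk hx hout
    exact St7.main n m hn hnm l k x hl hk hx hout
end

section
/- Let E be a topological vector space over ℝ and let B ⊆ E be a linearly independent subset. If there exist a Polish space Z and a continuous bijection ξ : Z → B (where B carries the subspace topology), then there exist a Polish space S and a continuous bijection from S onto the linear span of B (with its subspace topology). In particular, if E is a Polish topological vector space and B is a linearly independent Borel subset of E, then the linear span of B is a Borel subset of E. -/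
/-!
Refine the Polish topology of `Z` so that it admits a continuous injection into `ℝ`, and order `Z`
through it; then `{a < b}` is open in `Z × Z`. Every finitely supported `l : Z →₀ ℝ` is written
uniquely as `∑ i, single (z i) (c i)` with `z : Fin n → Z` strictly increasing and all `c i ≠ 0`,
and these pairs `(c, z)` form an open subset of `ℝⁿ × Zⁿ`, hence a Polish space. On the disjoint
union over `n`, the map `(c, z) ↦ ∑ i, c i • ξ (z i)` is continuous, and it is a bijection onto the
span of `B` by linear independence. Borelness of the span is then the Lusin–Souslin theorem.
-/

open Set

namespace Finsupp

variable {ι Z M : Type*} [Fintype ι] [AddCommMonoid M]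

theorem sum_single_apply_of_injective {z : ι → Z} (hz : Function.Injective z) (c : ι → M)
    (j : ι) : (∑ i, single (z i) (c i)) (z j) = c j := by
  classical
  simp [finsetSum_apply, single_apply, hz.eq_iff]

theorem support_sum_single_of_injective [DecidableEq Z] {z : ι → Z} (hz : Function.Injective z)
    {c : ι → M} (hc : ∀ i, c i ≠ 0) :
    (∑ i, single (z i) (c i)).support = Finset.univ.image z := by
  ext x
  simp only [mem_support_iff, Finset.mem_image, Finset.mem_univ, true_and]
  constructor
  · contrapose!
    intro hx
    simp [finsetSum_apply, hx]
  · rintro ⟨j, rfl⟩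
    rw [sum_single_apply_of_injective hz]
    exact hc j

end Finsupp

def SortedTerms (M Z : Type*) [Zero M] [Preorder Z] (n : ℕ) : Set ((Fin n → M) × (Fin n → Z)) :=
  {p | (∀ i, p.1 i ≠ 0) ∧ StrictMono p.2}

namespace SortedTerms

section Finsupp

variable {M Z : Type*} [AddCommMonoid M] [LinearOrder Z]

noncomputable def toFinsupp (s : Σ n, SortedTerms M Z n) : Z →₀ M :=
  ∑ i, Finsupp.single (s.2.1.2 i) (s.2.1.1 i)

theorem toFinsupp_apply (s : Σ n, SortedTerms M Z n) (j : Fin s.1) :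
    toFinsupp s (s.2.1.2 j) = s.2.1.1 j :=
  Finsupp.sum_single_apply_of_injective s.2.2.2.injective _ j

theorem support_toFinsupp (s : Σ n, SortedTerms M Z n) :
    (toFinsupp s).support = Finset.univ.image s.2.1.2 :=
  Finsupp.support_sum_single_of_injective s.2.2.2.injective s.2.2.1

theorem card_support_toFinsupp (s : Σ n, SortedTerms M Z n) :
    (toFinsupp s).support.card = s.1 := by
  simp [support_toFinsupp, Finset.card_image_of_injective _ s.2.2.2.injective]

theorem eq_orderEmbOfFin_support (s : Σ n, SortedTerms M Z n) :
    s.2.1.2 = (toFinsupp s).support.orderEmbOfFin (card_support_toFinsupp s) :=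
  Finset.orderEmbOfFin_unique _ (by simp [support_toFinsupp]) s.2.2.2

theorem toFinsupp_injective : Function.Injective (toFinsupp (M := M) (Z := Z)) := by
  rintro ⟨n, ⟨c, z⟩, hc, hz⟩ ⟨m, ⟨d, w⟩, hd, hw⟩ hst
  obtain rfl : n = m := by
    have h := card_support_toFinsupp ⟨n, _, hc, hz⟩
    rw [hst, card_support_toFinsupp] at h
    exact h.symm
  obtain rfl : z = w := by
    have h := eq_orderEmbOfFin_support ⟨n, _, hc, hz⟩
    simp only [hst] at h
    exact h.trans (eq_orderEmbOfFin_support ⟨n, _, hd, hw⟩).symm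
  obtain rfl : c = d := funext fun j => by
    have h := toFinsupp_apply ⟨n, _, hc, hz⟩ j
    rw [hst, toFinsupp_apply] at h
    exact h.symm
  rfl

theorem toFinsupp_surjective : Function.Surjective (toFinsupp (M := M) (Z := Z)) := by
  intro l
  set z := l.support.orderEmbOfFin rfl
  refine ⟨⟨l.support.card, ⟨fun i => l (z i), z⟩,
    fun i => Finsupp.mem_support_iff.1 (l.support.orderEmbOfFin_mem rfl i), z.strictMono⟩, ?_⟩
  calc ∑ i, Finsupp.single (z i) (l (z i))
      = ∑ x ∈ Finset.univ.map z.toEmbedding, Finsupp.single x (l x) := by rw [Finset.sum_map]; rfl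
    _ = l := by rw [Finset.map_orderEmbOfFin_univ]; exact l.sum_single

theorem linearCombination_toFinsupp {R E : Type*} [Semiring R] [AddCommMonoid E] [Module R E]
    (v : Z → E) {n : ℕ} (p : SortedTerms R Z n) :
    Finsupp.linearCombination R v (toFinsupp ⟨n, p⟩) = ∑ i, p.1.1 i • v (p.1.2 i) := by
  simp [toFinsupp, Finsupp.linearCombination_single]

end Finsupp

theorem isOpen {M Z : Type*} [Zero M] [TopologicalSpace M] [T1Space M] [TopologicalSpace Z]
    [LinearOrder Z] [OrderClosedTopology Z] (n : ℕ) : IsOpen (SortedTerms M Z n) := by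
  have hne : IsOpen {p : (Fin n → M) × (Fin n → Z) | ∀ i, p.1 i ≠ 0} := by
    simp only [ofPred_forall]
    exact isOpen_iInter_of_finite fun i =>
      isOpen_compl_singleton.preimage ((continuous_apply i).comp continuous_fst)
  have hmono : IsOpen {p : (Fin n → M) × (Fin n → Z) | StrictMono p.2} := by
    simp only [StrictMono, ofPred_forall]
    exact isOpen_iInter_of_finite fun i => isOpen_iInter_of_finite fun j =>
      isOpen_iInter_of_finite fun _ =>
        isOpen_lt ((continuous_apply i).comp continuous_snd)
          ((continuous_apply j).comp continuous_snd)
  exact hne.inter hmono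

end SortedTerms

section Span

universe u

variable {Z : Type u} {E : Type*} [TopologicalSpace Z] [PolishSpace Z] [LinearOrder Z]
  [OrderClosedTopology Z] [TopologicalSpace E] [AddCommGroup E] [Module ℝ E] [ContinuousAdd E]
  [ContinuousSMul ℝ E]

theorem exists_polishSpace_continuous_bijective_span {v : Z → E} (hvc : Continuous v)
    (hv : LinearIndependent ℝ v) :
    ∃ (S : Type u) (tS : TopologicalSpace S), @PolishSpace S tS ∧
      ∃ σ : S → (Submodule.span ℝ (range v) : Set E), @Continuous S _ tS _ σ ∧
        Function.Bijective σ := by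
  have (n : ℕ) : PolishSpace (SortedTerms ℝ Z n) := (SortedTerms.isOpen n).polishSpace
  have hmem (s : Σ n, SortedTerms ℝ Z n) :
      Finsupp.linearCombination ℝ v (SortedTerms.toFinsupp s) ∈ Submodule.span ℝ (range v) := by
    rw [← Finsupp.range_linearCombination]
    exact LinearMap.mem_range_self _ _
  refine ⟨Σ n, SortedTerms ℝ Z n, inferInstance, inferInstance,
    fun s => ⟨_, hmem s⟩, ?_, ?_, ?_⟩
  · refine continuous_sigma fun n => Continuous.subtype_mk ?_ _
    simp only [SortedTerms.linearCombination_toFinsupp]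
    exact continuous_finsetSum _ fun i _ => by fun_prop
  · intro s t hst
    exact SortedTerms.toFinsupp_injective (hv (congrArg Subtype.val hst))
  · rintro ⟨x, hx⟩
    obtain ⟨l, rfl⟩ := Finsupp.mem_span_range_iff_exists_finsupp.1 hx
    obtain ⟨s, rfl⟩ := SortedTerms.toFinsupp_surjective l
    exact ⟨s, Subtype.ext (Finsupp.linearCombination_apply ℝ _)⟩

end Span

theorem exists_polishSpace_le_continuous_injective_real {Z : Type*} [t : TopologicalSpace Z]
    [PolishSpace Z] :
    ∃ t' : TopologicalSpace Z, t' ≤ t ∧ @PolishSpace Z t' ∧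
      ∃ e : Z → ℝ, @Continuous Z ℝ t' _ e ∧ Function.Injective e := by
  let := borel Z
  have : BorelSpace Z := ⟨rfl⟩
  obtain ⟨e, he⟩ := MeasureTheory.exists_measurableEmbedding_real Z
  obtain ⟨t', hle, hc, hp⟩ := he.measurable.exists_continuous
  exact ⟨t', hle, hp, e, hc, he.injective⟩

theorem StrictMono.orderClosedTopology {Z β : Type*} [TopologicalSpace Z] [LinearOrder Z]
    [TopologicalSpace β] [LinearOrder β] [OrderClosedTopology β] {e : Z → β}
    (hc : Continuous e) (hm : StrictMono e) : OrderClosedTopology Z :=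
  ⟨by simpa only [preimage_ofPred_eq, Prod.map_fst, Prod.map_snd, hm.le_iff_le] using
    isClosed_le_prod.preimage (hc.prodMap hc)⟩

/-- If `B` is a linearly independent subset of a topological vector space `E` which is the
image of a Polish space under a continuous bijection, then so is the linear span of `B`.
In particular, if `E` is a Polish topological vector space and `B` is a Borel linearly
independent subset, then the linear span of `B` is Borel. -/
theorem statement9 {E : Type*} [TopologicalSpace E] [AddCommGroup E] [Module ℝ E]
    [IsTopologicalAddGroup E] [ContinuousSMul ℝ E] (B : Set E)
    (hB : LinearIndependent ℝ ((↑) : B → E))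
    (h : ∃ (Z : Type) (tZ : TopologicalSpace Z), @PolishSpace Z tZ ∧
      ∃ ξ : Z → B, @Continuous Z B tZ _ ξ ∧ Function.Bijective ξ) :
    (∃ (S : Type) (tS : TopologicalSpace S), @PolishSpace S tS ∧
      ∃ σ : S → (Submodule.span ℝ B : Set E), @Continuous S _ tS _ σ ∧ Function.Bijective σ) ∧
    (∀ (mE : MeasurableSpace E), @BorelSpace E _ mE → PolishSpace E →
      @MeasurableSet E mE B → @MeasurableSet E mE (Submodule.span ℝ B : Set E)) := by
  have hspan : ∃ (S : Type) (tS : TopologicalSpace S), @PolishSpace S tS ∧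
      ∃ σ : S → (Submodule.span ℝ B : Set E), @Continuous S _ tS _ σ ∧
        Function.Bijective σ := by
    obtain ⟨Z, tZ, hZ, ξ, hξc, hξb⟩ := h
    obtain ⟨t', ht', hZ', e, hec, hei⟩ :=
      @exists_polishSpace_le_continuous_injective_real Z tZ hZ
    let := t'
    let := LinearOrder.lift' e hei
    have : OrderClosedTopology Z := StrictMono.orderClosedTopology hec fun _ _ h => h
    have hrange : range (Subtype.val ∘ ξ) = B := by
      rw [hξb.surjective.range_comp, Subtype.range_coe]
    exact hrange ▸ exists_polishSpace_continuous_bijective_span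
      (continuous_subtype_val.comp (continuous_le_dom ht' hξc)) (hB.comp ξ hξb.injective)
  refine ⟨hspan, fun mE _ _ _ => ?_⟩
  obtain ⟨S, tS, hS, σ, hσc, hσb⟩ := hspan
  have hrange : range (Subtype.val ∘ σ) = Submodule.span ℝ B := by
    rw [hσb.surjective.range_comp, Subtype.range_coe]
  exact hrange ▸ MeasureTheory.measurableSet_range_of_continuous_injective
    (continuous_subtype_val.comp hσc) (Subtype.val_injective.comp hσb.injective)
end

section
/- Let X be a Polish Abelian group and let A be a closed subset of X. Then A is Haar-meager if and only if A is not Haar-open. -/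
open Set Filter Topology Pointwise MeasureTheory

/-!
If `f` witnesses that `A` is Haar-meager and `A` were Haar-open, Haar-openness at a point of the
compact set `range f` would put a nonempty open subset of the Cantor cube inside the meagre set
`f ⁻¹' (A + x)`, contradicting the Baire category theorem.

Conversely, let `p ∈ K` witness that `A` is not Haar-open. Using `2^ω ≃ (2^ω)^ω`, map the `j`-th
factor continuously onto `K ∩ closedBall p (r j)` by `v j` and put `f σ = p + ∑ j, (v j (σ j) - p)`,
the radii `r j` being small enough for the series to converge uniformly. The preimage of a
closed translate `A + x` is closed; if it contained a basic open set, changing a coordinate `σ j`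
left free by that set would show `K ∩ closedBall p (r j) ⊆ A + x'` for some `x'`, i.e. that `A`
is Haar-open at `p` in `K` after all.
-/

open Function Metric

section PartialSumAround

variable {X : Type*} [AddCommGroup X]

def partialSumAround (p : X) (g : ℕ → X) (J : ℕ) : X :=
  p + ∑ j ∈ Finset.range J, (g j - p)

theorem partialSumAround_succ (p : X) (g : ℕ → X) (J : ℕ) :
    partialSumAround p g (J + 1) = partialSumAround p g J + (g J - p) := by
  simp only [partialSumAround, Finset.sum_range_succ, add_assoc]

theorem partialSumAround_update (p : X) (g : ℕ → X) {j J : ℕ} (hj : j < J) (k : X) :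
    partialSumAround p (update g j k) J = partialSumAround p g J + (k - g j) := by
  have hmem : j ∈ Finset.range J := Finset.mem_range.2 hj
  simp only [partialSumAround, ← Finset.add_sum_erase _ _ hmem, update_self]
  rw [Finset.sum_congr rfl fun i hi => by rw [update_of_ne (Finset.ne_of_mem_erase hi)]]
  abel

theorem continuous_partialSumAround [TopologicalSpace X] [IsTopologicalAddGroup X] (p : X)
    (J : ℕ) : Continuous fun g : ℕ → X => partialSumAround p g J := by
  unfold partialSumAround
  fun_prop

end PartialSumAround

theorem exists_tendstoUniformlyOn_of_dist_le_geometric {α X : Type*} [PseudoMetricSpace X]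
    [CompleteSpace X] {F : ℕ → α → X} {S : Set α} {C r : ℝ} (hr₀ : 0 ≤ r) (hr₁ : r < 1)
    (hF : ∀ a ∈ S, ∀ n, dist (F n a) (F (n + 1) a) ≤ C * r ^ n) :
    ∃ Φ : α → X, TendstoUniformlyOn F Φ atTop S := by
  have hlim : ∀ a, ∃ l, a ∈ S → Tendsto (F · a) atTop (𝓝 l) := fun a => by
    by_cases ha : a ∈ S
    · obtain ⟨l, hl⟩ :=
        cauchySeq_tendsto_of_complete (cauchySeq_of_le_geometric r C hr₁ (hF a ha))
      exact ⟨l, fun _ => hl⟩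
    · exact ⟨F 0 a, fun h => absurd h ha⟩
  choose Φ hΦ using hlim
  have hbound : Tendsto (fun n => C * r ^ n / (1 - r)) atTop (𝓝 0) := by
    simpa using ((tendsto_pow_atTop_nhds_zero_of_lt_one hr₀ hr₁).const_mul C).div_const (1 - r)
  refine ⟨Φ, Metric.tendstoUniformlyOn_iff.2 fun ε hε => ?_⟩
  filter_upwards [hbound.eventually (eventually_lt_nhds hε)] with n hn a ha
  rw [dist_comm]
  exact (dist_le_of_le_geometric_of_tendsto r C hr₁ (hF a ha) (hΦ a ha) n).trans_lt hn

theorem IsCompact.exists_pos_forall_dist_add_sub_lt {X : Type*} [PseudoMetricSpace X]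
    [AddCommGroup X] [IsTopologicalAddGroup X] {C : Set X} (hC : IsCompact C) (p : X) {ε : ℝ}
    (hε : 0 < ε) :
    ∃ r > 0, ∀ z ∈ C, ∀ k ∈ closedBall p r, dist (z + (k - p)) z < ε := by
  obtain ⟨V, hV, hVC⟩ := hC.mem_uniformity_of_prod (f := fun k z => z + (k - p))
    (s := univ) (by fun_prop) (mem_univ p) (Metric.dist_mem_uniformity hε)
  rw [nhdsWithin_univ] at hV
  obtain ⟨r, hr, hrV⟩ := nhds_basis_closedBall.mem_iff.1 hV
  exact ⟨r, hr, fun z hz k hk => by simpa using hVC k (hrV hk) z hz⟩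

theorem IsCompact.exists_radii_continuousOn_sum_update {X : Type*} [MetricSpace X] [CompleteSpace X]
    [AddCommGroup X] [IsTopologicalAddGroup X] {K : Set X} (hK : IsCompact K) (p : X) :
    ∃ r : ℕ → ℝ, (∀ j, 0 < r j) ∧ ∃ Φ : (ℕ → X) → X,
      ContinuousOn Φ (univ.pi fun j => K ∩ closedBall p (r j)) ∧
      ∀ g ∈ univ.pi (fun j => K ∩ closedBall p (r j)), ∀ j, ∀ k ∈ K ∩ closedBall p (r j),
        Φ (update g j k) = Φ g + (k - g j) := by
  have hC : ∀ J, IsCompact ((partialSumAround p · J) '' univ.pi fun _ => K) := fun J =>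
    (isCompact_univ_pi fun _ => hK).image (continuous_partialSumAround p J)
  -- `r J` is so small that adding a term from `closedBall p (r J)` moves any partial sum of
  -- length `J` of points of `K` by less than `2⁻ᴶ`; hence the partial sums converge uniformly.
  choose r hr hstep using fun J =>
    (hC J).exists_pos_forall_dist_add_sub_lt p (pow_pos (one_half_pos (α := ℝ)) J)
  set S := univ.pi fun j => K ∩ closedBall p (r j)
  have hdist : ∀ g ∈ S, ∀ J,
      dist (partialSumAround p g J) (partialSumAround p g (J + 1)) ≤ 1 * (1 / 2) ^ J := by
    intro g hg J
    rw [partialSumAround_succ, dist_comm, one_mul]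
    exact (hstep J _ ⟨g, fun j _ => (hg j trivial).1, rfl⟩ _ (hg J trivial).2).le
  obtain ⟨Φ, hΦ⟩ := exists_tendstoUniformlyOn_of_dist_le_geometric (by norm_num) (by norm_num) hdist
  refine ⟨r, hr, Φ, hΦ.continuousOn (Frequently.of_forall fun J =>
    (continuous_partialSumAround p J).continuousOn), fun g hg j k hk => ?_⟩
  have hg' : update g j k ∈ S := (update_mem_pi_iff_of_mem hg).2 fun _ => hk
  refine tendsto_nhds_unique (hΦ.tendsto_at hg')
    (((hΦ.tendsto_at hg).add_const (k - g j)).congr' ?_)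
  filter_upwards [eventually_gt_atTop j] with J hJ
  exact (partialSumAround_update p g hJ k).symm

theorem exists_forall_update_mem_of_nonempty_interior {ι : Type*} [Infinite ι] [DecidableEq ι]
    {Y : ι → Type*} [∀ i, TopologicalSpace (Y i)] {U : Set (∀ i, Y i)}
    (hU : (interior U).Nonempty) : ∃ σ j, ∀ y, update σ j y ∈ U := by
  obtain ⟨σ, hσ⟩ := hU
  obtain ⟨I, u, hu, hIU⟩ := isOpen_pi_iff.1 isOpen_interior σ hσ
  obtain ⟨j, hj⟩ := Infinite.exists_notMem_finset I
  refine ⟨σ, j, fun y => interior_subset (hIU fun i hi => ?_)⟩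
  rw [update_of_ne (ne_of_mem_of_not_mem hi hj)]
  exact (hu i hi).2

theorem IsCompact.exists_continuous_cantor_range_eq {E : Type*} [TopologicalSpace E]
    [TopologicalSpace.MetrizableSpace E] {M : Set E} (hM : IsCompact M) (hne : M.Nonempty) :
    ∃ v : (ℕ → Bool) → E, Continuous v ∧ range v = M := by
  let := TopologicalSpace.metrizableSpaceMetric M
  have := isCompact_iff_compactSpace.1 hM
  have := hne.to_subtype
  obtain ⟨v, hv, hsurj⟩ := exists_nat_bool_continuous_surjective_of_compact M
  exact ⟨Subtype.val ∘ v, continuous_subtype_val.comp hv, by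
    rw [range_comp, hsurj.range_eq, image_univ, Subtype.range_coe]⟩

theorem HaarMeager.not_haarOpen {X : Type*} [TopologicalSpace X] [AddCommGroup X] {A : Set X}
    (hA : HaarMeager A) : ¬ HaarOpen A := by
  obtain ⟨f, hf, hmeagre⟩ := hA
  intro hopen
  obtain ⟨x, hx⟩ := hopen (range f) (isCompact_range hf) (f fun _ => false) (mem_range_self _)
  obtain ⟨U, hU, hpU, hUA⟩ := mem_nhdsWithin.1 hx
  exact not_isMeagre_of_isOpen (hU.preimage hf) ⟨_, hpU⟩
    ((hmeagre x).mono fun s hs => (hUA ⟨hs, mem_range_self s⟩).2)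

theorem haarMeager_of_not_haarOpen {X : Type*} [TopologicalSpace X] [AddCommGroup X]
    [IsTopologicalAddGroup X] [PolishSpace X] {A : Set X} (hA : IsClosed A)
    (hnot : ¬ HaarOpen A) : HaarMeager A := by
  unfold HaarOpen at hnot
  push Not at hnot
  obtain ⟨K, hK, p, hpK, hbad⟩ := hnot
  let := TopologicalSpace.upgradeIsCompletelyMetrizable X
  obtain ⟨r, hr, Φ, hΦ, hΦupdate⟩ := hK.exists_radii_continuousOn_sum_update p
  choose v hv hrange using fun j =>
    (hK.inter_right isClosed_closedBall).exists_continuous_cantor_range_eq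
      ⟨p, hpK, mem_closedBall_self (hr j).le⟩
  have hvS : ∀ σ : ℕ → ℕ → Bool,
      (fun j => v j (σ j)) ∈ univ.pi fun j => K ∩ closedBall p (r j) :=
    fun σ j _ => (hrange j).subset (mem_range_self _)
  set G : (ℕ → ℕ → Bool) → X := fun σ => Φ fun j => v j (σ j)
  have hG : Continuous G := hΦ.comp_continuous (by fun_prop) hvS
  have hGupdate : ∀ σ j t, G (update σ j t) = G σ + (v j t - v j (σ j)) := fun σ j t => by
    simp only [G, apply_update (fun j => v j)]
    exact hΦupdate _ (hvS σ) j _ ((hrange j).subset (mem_range_self t))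
  let e := cantorSpaceHomeomorphNatToCantorSpace
  refine ⟨G ∘ e, hG.comp e.continuous, fun x => ?_⟩
  have hclosed : IsClosed ((fun a => a + x) '' A) := (Homeomorph.addRight x).isClosedMap A hA
  rw [preimage_comp]
  refine IsMeagre.preimage_of_isOpenMap e.continuous e.isOpenMap
    ((hclosed.preimage hG).isNowhereDense_iff.2 ?_).isMeagre
  by_contra hint
  obtain ⟨σ, j, hσ⟩ := exists_forall_update_mem_of_nonempty_interior
    (nonempty_iff_ne_empty.2 hint)
  refine hbad (x - G σ + v j (σ j)) (mem_of_superset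
    (inter_mem_nhdsWithin K (closedBall_mem_nhds p (hr j))) ?_)
  intro k hk
  obtain ⟨t, rfl⟩ : k ∈ range (v j) := (hrange j).ge hk
  obtain ⟨a, ha, hax⟩ := hσ t
  refine ⟨hk.1, a, ha, ?_⟩
  calc a + (x - G σ + v j (σ j)) = (a + x) - G σ + v j (σ j) := by abel
    _ = v j t := by rw [show a + x = _ from hax, hGupdate]; abel

/-- A closed subset of a Polish Abelian group is Haar-meager if and only if it is not
Haar-open. -/
theorem statement12 {X : Type*} [TopologicalSpace X] [AddCommGroup X]
    [IsTopologicalAddGroup X] [PolishSpace X]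
    (A : Set X) (hA : IsClosed A) :
    HaarMeager A ↔ ¬ HaarOpen A :=
  ⟨HaarMeager.not_haarOpen, haarMeager_of_not_haarOpen hA⟩
end

section
/- Let X be a Polish topological vector space over ℝ and let A ⊆ X be a subset that is not null-finite. Then A belongs to the Kuczma–Ger class 𝓑_X: every additive function f : X → ℝ with sup f[A] < ∞ is continuous. -/
open Set Filter Topology Pointwise MeasureTheory

/-! If an additive `f` is bounded above near `0`, then so is `|f|` (as `f (-z) = -f z`), and
`f (m • z) = m * f z` turns a bound `M` on `U` into the bound `M / m` on `{z | m • z ∈ U}`;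
so `f` is continuous at `0`, hence everywhere. Otherwise, in a first-countable group there are
`x n → 0` with `f (x n) → ∞`; if `f ≤ M` on `A`, then `x n + y ∈ A` forces
`f (x n) ≤ M - f y`, which happens for only finitely many `n`, so `A` is null-finite. -/

theorem AddMonoidHom.continuous_of_isBoundedUnder_le_nhds_zero {G : Type*} [TopologicalSpace G]
    [AddGroup G] [IsTopologicalAddGroup G] (f : G →+ ℝ)
    (hf : (𝓝 0).IsBoundedUnder (· ≤ ·) f) : Continuous f := by
  refine continuous_of_continuousAt_zero f ?_
  obtain ⟨M, hM⟩ := hf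
  rw [eventually_map] at hM
  rw [ContinuousAt, map_zero, Metric.tendsto_nhds]
  intro ε hε
  obtain ⟨m, hm⟩ := exists_nat_gt (M / ε)
  have hM0 : 0 ≤ M := by simpa using hM.self_of_nhds
  have hm0 : (0 : ℝ) < m := (div_nonneg hM0 hε.le).trans_lt hm
  have hMm : M < m * ε := (div_lt_iff₀ hε).mp hm
  have hscale : Tendsto (fun z : G => m • z) (𝓝 0) (𝓝 0) := by
    simpa using (continuous_nsmul m).tendsto (0 : G)
  have hscale_neg : Tendsto (fun z : G => -(m • z)) (𝓝 0) (𝓝 0) := by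
    simpa using hscale.neg
  filter_upwards [hscale.eventually hM, hscale_neg.eventually hM] with z hpos hneg
  simp only [map_neg, map_nsmul, nsmul_eq_mul] at hpos hneg
  rw [Real.dist_eq, sub_zero, abs_lt]
  constructor
  · exact lt_of_mul_lt_mul_left (by linarith : (m : ℝ) * -ε < m * f z) hm0.le
  · exact lt_of_mul_lt_mul_left (hpos.trans_lt hMm) hm0.le

theorem Filter.exists_seq_tendsto_of_not_isBoundedUnder_le {α β : Type*} [LinearOrder β]
    [Nonempty β] [(atTop : Filter β).IsCountablyGenerated] {l : Filter α} [l.IsCountablyGenerated]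
    {u : α → β}
    (hu : ¬ l.IsBoundedUnder (· ≤ ·) u) :
    ∃ x : ℕ → α, Tendsto x atTop l ∧ Tendsto (u ∘ x) atTop atTop := by
  have : (l ⊓ comap u atTop).NeBot := by
    refine inf_neBot_iff.mpr fun U hU V hV => ?_
    obtain ⟨W, hW, hWV⟩ := mem_comap.mp hV
    obtain ⟨b, hb⟩ := mem_atTop_sets.mp hW
    by_contra hUV
    refine hu ⟨b, eventually_map.mpr (mem_of_superset hU fun z hz => ?_)⟩
    by_contra hzb
    exact hUV ⟨z, hz, hWV (hb _ (le_of_not_ge hzb))⟩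
  obtain ⟨x, hx⟩ := exists_seq_tendsto (l ⊓ comap u atTop)
  rw [tendsto_inf, tendsto_comap_iff] at hx
  exact ⟨x, hx⟩

theorem nullFinite_of_tendsto_atTop {X : Type*} [TopologicalSpace X] [AddCommGroup X]
    {A : Set X} (f : X →+ ℝ) (hA : BddAbove (f '' A)) {x : ℕ → X}
    (hx : Tendsto x atTop (𝓝 0)) (hfx : Tendsto (f ∘ x) atTop atTop) : NullFinite A := by
  obtain ⟨M, hM⟩ := hA
  refine ⟨x, hx, fun y => ?_⟩
  have hlarge : ∀ᶠ n in cofinite, M - f y < f (x n) := by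
    rw [Nat.cofinite_eq_atTop]
    exact hfx.eventually_gt_atTop _
  have hout : ∀ᶠ n in cofinite, x n + y ∉ A := hlarge.mono fun n hn hmem => by
    have : f (x n + y) ≤ M := hM (mem_image_of_mem f hmem)
    rw [map_add] at this
    linarith
  simpa using eventually_cofinite.mp hout

theorem statement13_general {X : Type*} [TopologicalSpace X] [AddCommGroup X]
    [IsTopologicalAddGroup X] [PolishSpace X]
    (A : Set X) (hA : ¬ NullFinite A)
    (f : X → ℝ) (hadd : ∀ x y : X, f (x + y) = f x + f y)
    (hbdd : BddAbove (f '' A)) :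
    Continuous f := by
  let φ : X →+ ℝ := AddMonoidHom.mk' f hadd
  refine φ.continuous_of_isBoundedUnder_le_nhds_zero (by_contra fun hunbdd => hA ?_)
  obtain ⟨x, hx, hφx⟩ := exists_seq_tendsto_of_not_isBoundedUnder_le hunbdd
  exact nullFinite_of_tendsto_atTop φ hbdd hx hφx

/-- In a Polish topological vector space `X`, every set `A` that is not null-finite belongs
to the Kuczma–Ger class `𝓑_X`: every additive `f : X → ℝ` bounded above on `A` is
continuous. -/
theorem statement13 {X : Type*} [TopologicalSpace X] [AddCommGroup X] [Module ℝ X]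
    [IsTopologicalAddGroup X] [ContinuousSMul ℝ X] [PolishSpace X]
    (A : Set X) (hA : ¬ NullFinite A)
    (f : X → ℝ) (hadd : ∀ x y : X, f (x + y) = f x + f y)
    (hbdd : BddAbove (f '' A)) :
    Continuous f :=
  statement13_general A hA f hadd hbdd
end

section
/- Let X be a Polish Abelian group and let A be a Borel subset of X which is Haar-thin. Then A is both Haar-null and Haar-meager in X. -/
open Set Filter Topology Pointwise MeasureTheory

/-!
A thin set `T` of the Cantor cube, transported to the compact group `ℕ → ZMod 2`, contains no two
points differing by a basis vector `eₙ`. Since `eₙ → 0`, the set `T - T` is not a neighbourhood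
of `0`, so `T` is Haar-null by Steinhaus' theorem and meagre by Pettis' theorem. Pushing the Haar
measure forward along the witness `f` of Haar-thinness, and using `f` itself as the witness of
Haar-meagreness, handles every translate `A + x` at once.
-/

/-- **Pettis' theorem**, the category analogue of Steinhaus' theorem. -/
theorem BaireMeasurableSet.sub_mem_nhds_zero_of_not_isMeagre {G : Type*} [TopologicalSpace G]
    [AddGroup G] [IsTopologicalAddGroup G] [BaireSpace G] {s : Set G}
    (hs : BaireMeasurableSet s) (hns : ¬IsMeagre s) : s - s ∈ 𝓝 0 := by
  obtain ⟨U, hUo, hsU⟩ := hs.residualEq_isOpen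
  have hUs : IsMeagre (U \ s) := hsU.mem_iff.mono fun _ hx hxU => hxU.2 (hx.2 hxU.1)
  obtain ⟨u, hu⟩ : U.Nonempty := by
    refine nonempty_iff_ne_empty.2 fun hU => hns ?_
    exact hsU.mem_iff.mono fun _ hx hxs => by simpa [hU] using hx.1 hxs
  have hW : (· + u) ⁻¹' U ∈ 𝓝 (0 : G) :=
    (continuous_add_const u).continuousAt.preimage_mem_nhds (by simpa using hUo.mem_nhds hu)
  refine mem_of_superset hW fun w hw => ?_
  -- `V` is an open neighbourhood of `w + u`; off a meagre set, `y ∈ V` gives `y, -w + y ∈ s`.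
  set V := U ∩ (-w + ·) ⁻¹' U
  have hVo : IsOpen V := hUo.inter (hUo.preimage (continuous_const_add _))
  have hVne : V.Nonempty := ⟨w + u, hw, by simpa using hu⟩
  have hbad : IsMeagre (V \ (s ∩ (-w + ·) ⁻¹' s)) := by
    refine (hUs.union (hUs.preimage_of_isOpenMap (continuous_const_add _)
      (Homeomorph.addLeft (-w)).isOpenMap)).mono ?_
    rintro y ⟨⟨hyU, hwyU⟩, hy⟩
    by_cases hys : y ∈ s
    · exact Or.inr ⟨hwyU, fun h => hy ⟨hys, h⟩⟩
    · exact Or.inl ⟨hyU, hys⟩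
  obtain ⟨y, -, hys, hwys⟩ : (V ∩ (s ∩ (-w + ·) ⁻¹' s)).Nonempty := by
    by_contra h
    exact not_isMeagre_of_isOpen hVo hVne
      (hbad.mono fun y hy => (Set.mem_sdiff y).2 ⟨hy, fun hys => h ⟨y, hy, hys⟩⟩)
  exact ⟨y, hys, -w + y, hwys, by simp [sub_eq_add_neg]⟩

theorem tendsto_pi_single_cofinite_nhds_zero {ι M : Type*} [DecidableEq ι] [TopologicalSpace M]
    [Zero M] (a : M) : Tendsto (fun i => (Pi.single i a : ι → M)) cofinite (𝓝 0) :=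
  tendsto_pi_nhds.2 fun j => tendsto_const_nhds.congr' <|
    (eventually_cofinite_ne j).mono fun _ hi => by simp [Pi.single_eq_of_ne' hi]

/-- The Cantor cube carries the compact group structure of `ℕ → ZMod 2`. -/
def cantorCubeHomeomorph : (ℕ → Bool) ≃ₜ (ℕ → ZMod 2) :=
  Homeomorph.piCongrRight fun _ => finTwoEquiv.symm.toHomeomorphOfDiscrete

noncomputable def cantorMeasure : Measure (ℕ → Bool) :=
  (Measure.addHaarMeasure ⊤).map cantorCubeHomeomorph.symm

instance : IsProbabilityMeasure cantorMeasure := by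
  let K₀ : TopologicalSpace.PositiveCompacts (ℕ → ZMod 2) := ⊤
  have : IsProbabilityMeasure (Measure.addHaarMeasure K₀) :=
    ⟨by simpa [K₀] using Measure.addHaarMeasure_self (K₀ := K₀)⟩
  exact Measure.isProbabilityMeasure_map cantorCubeHomeomorph.symm.continuous.aemeasurable

namespace IsThinSet

variable {T : Set (ℕ → Bool)}

theorem single_notMem_sub (hT : IsThinSet T) (n : ℕ) :
    Pi.single n 1 ∉ cantorCubeHomeomorph.symm ⁻¹' T - cantorCubeHomeomorph.symm ⁻¹' T := by
  intro h
  obtain ⟨a, ha, b, hb, hab⟩ := Set.mem_sub.1 h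
  have hcoord : ∀ m, m ≠ n → a m = b m := fun m hm =>
    sub_eq_zero.1 (by rw [← Pi.sub_apply, hab, Pi.single_eq_of_ne hm])
  have : a = b := cantorCubeHomeomorph.symm.injective <|
    hT n _ ha _ hb fun m hm => congrArg finTwoEquiv (hcoord m hm)
  simpa [this] using congrFun hab n

theorem sub_notMem_nhds_zero (hT : IsThinSet T) :
    cantorCubeHomeomorph.symm ⁻¹' T - cantorCubeHomeomorph.symm ⁻¹' T ∉ 𝓝 0 := fun h =>
  have ⟨n, hn⟩ := ((tendsto_pi_single_cofinite_nhds_zero (1 : ZMod 2)).eventually_mem h).exists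
  hT.single_notMem_sub n hn

theorem cantorMeasure_eq_zero (hT : IsThinSet T) (hTm : MeasurableSet T) :
    cantorMeasure T = 0 := by
  have hm := hTm.preimage cantorCubeHomeomorph.symm.continuous.measurable
  rw [cantorMeasure, Measure.map_apply cantorCubeHomeomorph.symm.continuous.measurable hTm]
  by_contra hpos
  exact hT.sub_notMem_nhds_zero <|
    Measure.sub_mem_nhds_zero_of_addHaar_pos _ _ hm (pos_iff_ne_zero.2 hpos)

theorem isMeagre (hT : IsThinSet T) (hTm : MeasurableSet T) : IsMeagre T := by
  have hm := hTm.preimage cantorCubeHomeomorph.symm.continuous.measurable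
  have hns : IsMeagre (cantorCubeHomeomorph.symm ⁻¹' T) := by
    by_contra hns
    exact hT.sub_notMem_nhds_zero (hm.baireMeasurableSet.sub_mem_nhds_zero_of_not_isMeagre hns)
  simpa [Homeomorph.preimage_symm] using hns.preimage_of_isOpenMap cantorCubeHomeomorph.continuous
    cantorCubeHomeomorph.isOpenMap

end IsThinSet

theorem statement15_general {X : Type*} [TopologicalSpace X] [AddCommGroup X]
    [IsTopologicalAddGroup X] [MeasurableSpace X] [BorelSpace X]
    (A : Set X) (hBorel : MeasurableSet A) (hA : HaarThin A) :
    HaarNull A ∧ HaarMeager A := by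
  obtain ⟨f, hf, hthin⟩ := hA
  have htrans (x : X) : MeasurableSet ((fun a => a + x) '' A) := by
    rw [image_add_right]
    exact hBorel.preimage (measurable_add_const _)
  have hpre (x : X) := (htrans x).preimage hf.measurable
  refine ⟨⟨cantorMeasure.map f, Measure.isProbabilityMeasure_map hf.aemeasurable, fun x => ?_⟩,
    ⟨f, hf, fun x => (hthin x).isMeagre (hpre x)⟩⟩
  rw [Measure.map_apply hf.measurable (htrans x)]
  exact (hthin x).cantorMeasure_eq_zero (hpre x)

/-- Every Borel Haar-thin subset of a Polish Abelian group is Haar-null and Haar-meager. -/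
theorem statement15 {X : Type*} [TopologicalSpace X] [AddCommGroup X]
    [IsTopologicalAddGroup X] [PolishSpace X] [MeasurableSpace X] [BorelSpace X]
    (A : Set X) (hBorel : MeasurableSet A) (hA : HaarThin A) :
    HaarNull A ∧ HaarMeager A :=
  statement15_general A hBorel hA
end

section
/- Let X be a topological vector space over ℝ which is a Baire space. Then the Kuczma–Ger classes 𝓐_X and 𝓑_X coincide: for every subset A ⊆ X, the following are equivalent: (i) every mid-convex function f : D → ℝ defined on an open convex set D ⊆ X with A ⊆ D and sup f[A] < ∞ is continuous on D; (ii) every additive function f : X → ℝ with sup f[A] < ∞ is continuous. -/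
/-!
Additive functions are mid-convex, which gives one direction. Conversely, let `f` be mid-convex on
`D` and bounded above on `A`. At each `z ∈ D` the dyadic directional derivative
`x ↦ inf_k 2ᵏ (f (z + 2⁻ᵏ x) - f z)` is subadditive and ℕ-homogeneous, so by a Zorn argument
(Hahn–Banach for abelian groups) it dominates an additive `g`, and then `f ≥ f z + g (· - z)` on
`D`. Such a `g` is bounded above on `A`, hence continuous, hence `ℝ`-linear. With continuous affine
minorants touching it at every point, `f` is convex and lower semicontinuous on `D`; by Baire one
of the closed sublevel sets `{f ≤ n}` has interior, and a convex function bounded above on an open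
set is continuous on its whole open domain.
-/

open Set Filter Topology

structure IsNatSublinear {G : Type*} [AddCommGroup G] (p : G → ℝ) : Prop where
  map_add_le : ∀ x y, p (x + y) ≤ p x + p y
  map_nsmul : ∀ (n : ℕ) x, p (n • x) = n * p x

namespace IsNatSublinear

variable {G : Type*} [AddCommGroup G] {p : G → ℝ}

theorem of_map_two_nsmul (hadd : ∀ x y, p (x + y) ≤ p x + p y)
    (htwo : ∀ x, p (2 • x) = 2 * p x) : IsNatSublinear p := by
  have hzero : p 0 = 0 := by linarith [nsmul_zero (M := G) 2 ▸ htwo 0]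
  have hle : ∀ (n : ℕ) x, p (n • x) ≤ n * p x := by
    intro n x
    induction n with
    | zero => simp [hzero]
    | succ n ih => rw [succ_nsmul]; push_cast; linarith [hadd (n • x) x]
  have hpow : ∀ (k : ℕ) x, p (2 ^ k • x) = 2 ^ k * p x := by
    intro k x
    induction k with
    | zero => simp
    | succ k ih => rw [pow_succ', mul_nsmul', htwo, ih]; ring
  refine ⟨hadd, fun n x => le_antisymm (hle n x) ?_⟩
  -- `2 ^ n • x` splits as `n • x + (2 ^ n - n) • x`
  have hn : n ≤ 2 ^ n := n.lt_two_pow_self.le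
  have hsplit := hadd (n • x) ((2 ^ n - n) • x)
  rw [← add_nsmul, Nat.add_sub_cancel' hn, hpow] at hsplit
  have hrest := hle (2 ^ n - n) x
  rw [Nat.cast_sub hn] at hrest
  push_cast at hrest
  linarith

theorem map_zero (hp : IsNatSublinear p) : p 0 = 0 := by
  simpa using hp.map_nsmul 0 0

theorem neg_map_neg_le (hp : IsNatSublinear p) (x : G) : -p (-x) ≤ p x := by
  linarith [add_neg_cancel x ▸ hp.map_add_le x (-x), hp.map_zero]

theorem map_add_of_map_neg_le (hp : IsNatSublinear p) (hneg : ∀ y, p (-y) ≤ -p y) (x y : G) :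
    p (x + y) = p x + p y := by
  refine le_antisymm (hp.map_add_le x y) ?_
  linarith [add_neg_cancel_right x y ▸ hp.map_add_le (x + y) (-y), hneg y]

protected theorem iInf {ι : Sort*} [Nonempty ι] {q : ι → G → ℝ}
    (hq : ∀ i, IsNatSublinear (q i)) (hdir : Directed (· ≥ ·) q)
    (hbdd : ∀ x, BddBelow (range fun i => q i x)) : IsNatSublinear fun x => ⨅ i, q i x := by
  refine ⟨fun x y => le_ciInf_add_ciInf fun i j => ?_, fun n x => ?_⟩
  · obtain ⟨k, hki, hkj⟩ := hdir i j
    calc ⨅ i, q i (x + y) ≤ q k (x + y) := ciInf_le (hbdd _) k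
      _ ≤ q k x + q k y := (hq k).map_add_le x y
      _ ≤ q i x + q j y := add_le_add (hki x) (hkj y)
  · simp_rw [(hq _).map_nsmul]
    exact (Real.mul_iInf_of_nonneg n.cast_nonneg _).symm

theorem bddBelow_range_add_nsmul_sub (hp : IsNatSublinear p) (x y : G) :
    BddBelow (range fun t : ℕ => p (x + t • y) - t * p y) := by
  refine ⟨-p (-x), forall_mem_range.2 fun t => ?_⟩
  have := add_neg_cancel_comm x (t • y) ▸ hp.map_add_le (x + t • y) (-x)
  rw [hp.map_nsmul] at this
  linarith

/-- If `p` is minimal among sublinear functionals, it equals this one, which forces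
`p (-y) ≤ -p y`. -/
theorem iInf_add_nsmul_sub (hp : IsNatSublinear p) (y : G) :
    IsNatSublinear fun x => ⨅ t : ℕ, p (x + t • y) - t * p y := by
  have hbdd := hp.bddBelow_range_add_nsmul_sub
  refine of_map_two_nsmul (fun x x' => le_ciInf_add_ciInf fun s t => ?_) fun x => ?_
  · refine ciInf_le_of_le (hbdd _ _) (s + t) ?_
    have := hp.map_add_le (x + s • y) (x' + t • y)
    rw [show x + s • y + (x' + t • y) = x + x' + (s + t) • y by rw [add_nsmul]; abel] at this
    push_cast
    linarith
  refine le_antisymm ?_ (le_ciInf fun t => ?_)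
  · rw [Real.mul_iInf_of_nonneg zero_le_two]
    refine le_ciInf fun t => ciInf_le_of_le (hbdd _ _) (2 * t) ?_
    rw [mul_nsmul', ← nsmul_add, hp.map_nsmul]
    push_cast
    linarith
  · have h2 := hp.map_add_le (2 • x + t • y) (t • y)
    rw [show 2 • x + t • y + t • y = 2 • (x + t • y) by abel, hp.map_nsmul, hp.map_nsmul] at h2
    have := mul_le_mul_of_nonneg_left (ciInf_le (hbdd x y) t) zero_le_two
    push_cast at h2 this ⊢
    linarith

theorem iInf_add_nsmul_sub_le (hp : IsNatSublinear p) (x y : G) :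
    ⨅ t : ℕ, p (x + t • y) - t * p y ≤ p x :=
  ciInf_le_of_le (hp.bddBelow_range_add_nsmul_sub x y) 0 (by simp)

theorem iInf_neg_add_nsmul_sub_le (hp : IsNatSublinear p) (y : G) :
    ⨅ t : ℕ, p (-y + t • y) - t * p y ≤ -p y :=
  ciInf_le_of_le (hp.bddBelow_range_add_nsmul_sub (-y) y) 1 (by simp [hp.map_zero])

theorem exists_addMonoidHom_le (hp : IsNatSublinear p) : ∃ g : G →+ ℝ, ∀ x, g x ≤ p x := by
  set F : Set (G → ℝ)ᵒᵈ := {q | IsNatSublinear (OrderDual.ofDual q) ∧ OrderDual.ofDual q ≤ p}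
  have hchains : ∀ c ⊆ F, IsChain (· ≤ ·) c → ∀ q₀ ∈ c, ∃ lb ∈ F, ∀ q ∈ c, q ≤ lb := by
    intro c hc hchain q₀ hq₀
    have : Nonempty c := ⟨⟨q₀, hq₀⟩⟩
    have hbdd (x : G) : BddBelow (range fun q : c => OrderDual.ofDual q.1 x) :=
      ⟨-p (-x), forall_mem_range.2 fun q =>
        (neg_le_neg ((hc q.2).2 (-x))).trans ((hc q.2).1.neg_map_neg_le x)⟩
    refine ⟨fun x => ⨅ q : c, OrderDual.ofDual q.1 x, ⟨IsNatSublinear.iInf (fun q => (hc q.2).1)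
      hchain.directedOn.directed_val hbdd, fun x => ?_⟩, fun q hq x => ciInf_le (hbdd x) ⟨q, hq⟩⟩
    exact (ciInf_le (hbdd x) ⟨q₀, hq₀⟩).trans ((hc hq₀).2 x)
  obtain ⟨m, -, ⟨hm, hmp⟩, hmin⟩ := zorn_le_nonempty₀ F hchains (OrderDual.toDual p) ⟨hp, le_rfl⟩
  have hneg (y : G) : m (-y) ≤ -m y := by
    have hQm : (fun x => ⨅ t : ℕ, m (x + t • y) - t * m y) ≤ m :=
      fun x => hm.iInf_add_nsmul_sub_le x y
    exact (hmin ⟨hm.iInf_add_nsmul_sub y, hQm.trans hmp⟩ hQm (-y)).trans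
      (hm.iInf_neg_add_nsmul_sub_le y)
  exact ⟨AddMonoidHom.mk' m (hm.map_add_of_map_neg_le hneg), hmp⟩

end IsNatSublinear

section MidConvex

variable {X : Type*} [AddCommGroup X] [Module ℝ X] {D : Set X} {f : X → ℝ} {x₀ x y : X} {j k l : ℕ}

def MidConvexOn (D : Set X) (f : X → ℝ) : Prop :=
  ∀ x ∈ D, ∀ y ∈ D, f (((1 : ℝ) / 2) • (x + y)) ≤ (f x + f y) / 2

theorem midConvexOn_of_map_add (hf : ∀ x y, f (x + y) = f x + f y) : MidConvexOn D f := by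
  intro x _ y _
  have := hf (((1 : ℝ) / 2) • (x + y)) (((1 : ℝ) / 2) • (x + y))
  rw [← add_smul, add_halves, one_smul, hf x y] at this
  linarith

def dyadicIndices (D : Set X) (x₀ x : X) : Set ℕ := {k | x₀ + ((2 : ℝ) ^ k)⁻¹ • x ∈ D}

noncomputable def dyadicSlope (f : X → ℝ) (x₀ x : X) (k : ℕ) : ℝ :=
  2 ^ k * (f (x₀ + ((2 : ℝ) ^ k)⁻¹ • x) - f x₀)

/-- For mid-convex `f` the slopes decrease in `k`, so this is their limit as `k → ∞`. -/
noncomputable def dyadicDeriv (D : Set X) (f : X → ℝ) (x₀ x : X) : ℝ :=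
  ⨅ k : dyadicIndices D x₀ x, dyadicSlope f x₀ x k

theorem dyadic_point_succ_add (x₀ x y : X) (k : ℕ) :
    x₀ + ((2 : ℝ) ^ (k + 1))⁻¹ • (x + y) =
      ((1 : ℝ) / 2) • ((x₀ + ((2 : ℝ) ^ k)⁻¹ • x) + (x₀ + ((2 : ℝ) ^ k)⁻¹ • y)) := by
  rw [pow_succ]
  module

theorem Convex.succ_mem_dyadicIndices_add (hD : Convex ℝ D) (hx : k ∈ dyadicIndices D x₀ x)
    (hy : k ∈ dyadicIndices D x₀ y) : k + 1 ∈ dyadicIndices D x₀ (x + y) := by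
  have := hD hx hy (by norm_num : (0 : ℝ) ≤ 1 / 2) (by norm_num : (0 : ℝ) ≤ 1 / 2) (by norm_num)
  rwa [← smul_add, ← dyadic_point_succ_add] at this

theorem zero_mem_dyadicIndices (hx₀ : x₀ ∈ D) (k : ℕ) : k ∈ dyadicIndices D x₀ 0 := by
  simpa [dyadicIndices] using hx₀

theorem Convex.mem_dyadicIndices_of_le (hD : Convex ℝ D) (hx₀ : x₀ ∈ D)
    (hk : k ∈ dyadicIndices D x₀ x) (hkl : k ≤ l) : l ∈ dyadicIndices D x₀ x := by
  induction l, hkl using Nat.le_induction with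
  | base => exact hk
  | succ l _ ih => simpa using hD.succ_mem_dyadicIndices_add ih (zero_mem_dyadicIndices hx₀ l)

theorem dyadic_point_succ_two_nsmul (x₀ x : X) (k : ℕ) :
    x₀ + ((2 : ℝ) ^ (k + 1))⁻¹ • (2 • x) = x₀ + ((2 : ℝ) ^ k)⁻¹ • x := by
  rw [pow_succ, two_nsmul]
  module

theorem succ_mem_dyadicIndices_two_nsmul_iff :
    k + 1 ∈ dyadicIndices D x₀ (2 • x) ↔ k ∈ dyadicIndices D x₀ x :=
  Iff.of_eq (congrArg (· ∈ D) (dyadic_point_succ_two_nsmul x₀ x k))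

theorem dyadicSlope_zero_right (k : ℕ) : dyadicSlope f x₀ 0 k = 0 := by
  simp [dyadicSlope]

theorem dyadicSlope_succ_two_nsmul :
    dyadicSlope f x₀ (2 • x) (k + 1) = 2 * dyadicSlope f x₀ x k := by
  rw [dyadicSlope, dyadicSlope, dyadic_point_succ_two_nsmul, pow_succ]
  ring

namespace MidConvexOn

theorem dyadicSlope_succ_add_le (hf : MidConvexOn D f) (hx : k ∈ dyadicIndices D x₀ x)
    (hy : k ∈ dyadicIndices D x₀ y) :
    dyadicSlope f x₀ (x + y) (k + 1) ≤ dyadicSlope f x₀ x k + dyadicSlope f x₀ y k := by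
  have := hf _ hx _ hy
  rw [← dyadic_point_succ_add] at this
  have := mul_le_mul_of_nonneg_left this (pow_nonneg zero_le_two k)
  simp only [dyadicSlope, pow_succ] at this ⊢
  linarith

theorem dyadicSlope_succ_le (hf : MidConvexOn D f) (hx₀ : x₀ ∈ D) (hx : k ∈ dyadicIndices D x₀ x) :
    dyadicSlope f x₀ x (k + 1) ≤ dyadicSlope f x₀ x k := by
  simpa [dyadicSlope_zero_right] using
    hf.dyadicSlope_succ_add_le hx (zero_mem_dyadicIndices hx₀ k)

theorem dyadicSlope_le_of_le (hf : MidConvexOn D f) (hD : Convex ℝ D) (hx₀ : x₀ ∈ D)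
    (hx : k ∈ dyadicIndices D x₀ x) (hkl : k ≤ l) :
    dyadicSlope f x₀ x l ≤ dyadicSlope f x₀ x k := by
  induction l, hkl using Nat.le_induction with
  | base => exact le_rfl
  | succ l hkl ih =>
    exact (hf.dyadicSlope_succ_le hx₀ (hD.mem_dyadicIndices_of_le hx₀ hx hkl)).trans ih

theorem neg_dyadicSlope_neg_le (hf : MidConvexOn D f) (hx : k ∈ dyadicIndices D x₀ x)
    (hx' : k ∈ dyadicIndices D x₀ (-x)) :
    -dyadicSlope f x₀ (-x) k ≤ dyadicSlope f x₀ x k := by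
  have := hf.dyadicSlope_succ_add_le hx hx'
  rw [add_neg_cancel, dyadicSlope_zero_right] at this
  linarith

theorem bddBelow_dyadicSlope (hf : MidConvexOn D f) (hD : Convex ℝ D) (hx₀ : x₀ ∈ D)
    (hx' : j ∈ dyadicIndices D x₀ (-x)) :
    BddBelow (range fun k : dyadicIndices D x₀ x => dyadicSlope f x₀ x k) := by
  refine ⟨-dyadicSlope f x₀ (-x) j, forall_mem_range.2 fun ⟨k, hk⟩ => ?_⟩
  have hl := hD.mem_dyadicIndices_of_le hx₀ hk (le_max_right j k)
  have hl' := hD.mem_dyadicIndices_of_le hx₀ hx' (le_max_left j k)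
  calc -dyadicSlope f x₀ (-x) j ≤ -dyadicSlope f x₀ (-x) (max j k) :=
        neg_le_neg (hf.dyadicSlope_le_of_le hD hx₀ hx' (le_max_left j k))
    _ ≤ dyadicSlope f x₀ x (max j k) := hf.neg_dyadicSlope_neg_le hl hl'
    _ ≤ dyadicSlope f x₀ x k := hf.dyadicSlope_le_of_le hD hx₀ hk (le_max_right j k)

theorem isNatSublinear_dyadicDeriv (hf : MidConvexOn D f) (hD : Convex ℝ D) (hx₀ : x₀ ∈ D)
    (habs : ∀ x, (dyadicIndices D x₀ x).Nonempty) : IsNatSublinear (dyadicDeriv D f x₀) := by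
  have hbdd (x : X) := hf.bddBelow_dyadicSlope hD hx₀ (habs (-x)).some_mem (x := x)
  have hne (x : X) : Nonempty (dyadicIndices D x₀ x) := (habs x).to_subtype
  refine .of_map_two_nsmul (fun x y => le_ciInf_add_ciInf fun ⟨k, hk⟩ ⟨j, hj⟩ => ?_) fun x => ?_
  · have hkx := hD.mem_dyadicIndices_of_le hx₀ hk (le_max_left k j)
    have hjy := hD.mem_dyadicIndices_of_le hx₀ hj (le_max_right k j)
    refine ciInf_le_of_le (hbdd _) ⟨_, hD.succ_mem_dyadicIndices_add hkx hjy⟩ ?_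
    exact (hf.dyadicSlope_succ_add_le hkx hjy).trans (add_le_add
      (hf.dyadicSlope_le_of_le hD hx₀ hk (le_max_left k j))
      (hf.dyadicSlope_le_of_le hD hx₀ hj (le_max_right k j)))
  refine le_antisymm ?_ (le_ciInf fun ⟨k, hk⟩ => ?_)
  · rw [dyadicDeriv, dyadicDeriv, Real.mul_iInf_of_nonneg zero_le_two]
    exact le_ciInf fun ⟨k, hk⟩ => ciInf_le_of_le (hbdd _)
      ⟨k + 1, succ_mem_dyadicIndices_two_nsmul_iff.2 hk⟩ dyadicSlope_succ_two_nsmul.le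
  · have hk' :=
      succ_mem_dyadicIndices_two_nsmul_iff.1 (hD.mem_dyadicIndices_of_le hx₀ hk k.le_succ)
    calc 2 * dyadicDeriv D f x₀ x ≤ 2 * dyadicSlope f x₀ x k :=
          mul_le_mul_of_nonneg_left (ciInf_le (hbdd x) ⟨k, hk'⟩) zero_le_two
      _ = dyadicSlope f x₀ (2 • x) (k + 1) := dyadicSlope_succ_two_nsmul.symm
      _ ≤ dyadicSlope f x₀ (2 • x) k := hf.dyadicSlope_succ_le hx₀ hk

theorem exists_addMonoidHom_le (hf : MidConvexOn D f) (hD : Convex ℝ D) (hx₀ : x₀ ∈ D)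
    (habs : ∀ x, (dyadicIndices D x₀ x).Nonempty) :
    ∃ g : X →+ ℝ, ∀ x ∈ D, f x₀ + g (x - x₀) ≤ f x := by
  obtain ⟨g, hg⟩ := (hf.isNatSublinear_dyadicDeriv hD hx₀ habs).exists_addMonoidHom_le
  refine ⟨g, fun x hx => ?_⟩
  have h0 : 0 ∈ dyadicIndices D x₀ (x - x₀) := by simpa [dyadicIndices] using hx
  have := ciInf_le (hf.bddBelow_dyadicSlope hD hx₀ (habs (-(x - x₀))).some_mem) ⟨0, h0⟩
  simp only [dyadicSlope, pow_zero, inv_one, one_smul, add_sub_cancel, one_mul] at this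
  linarith [hg (x - x₀), show dyadicDeriv D f x₀ (x - x₀) ≤ _ from this]

end MidConvexOn

end MidConvex


section Topological

variable {X : Type*} [TopologicalSpace X] {D : Set X} {f : X → ℝ}

theorem lowerSemicontinuousOn_of_forall_continuous_minorant
    (h : ∀ z ∈ D, ∃ g : X → ℝ, Continuous g ∧ g z = f z ∧ ∀ x ∈ D, g x ≤ f x) :
    LowerSemicontinuousOn f D := by
  intro z hz y hy
  obtain ⟨g, hg, hgz, hgf⟩ := h z hz
  filter_upwards [nhdsWithin_le_nhds ((hg.tendsto z).eventually_const_lt (hgz.symm ▸ hy)),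
    self_mem_nhdsWithin] with x hx hxD
  exact hx.trans_le (hgf x hxD)

theorem LowerSemicontinuousOn.exists_isOpen_subset_bddAbove [BaireSpace X]
    (hf : LowerSemicontinuousOn f D) (hD : IsOpen D) (hne : D.Nonempty) :
    ∃ U, IsOpen U ∧ U.Nonempty ∧ U ⊆ D ∧ BddAbove (f '' U) := by
  have := hD.baireSpace
  have := hne.to_subtype
  have hlsc := lowerSemicontinuous_restrict_iff.2 hf
  obtain ⟨n, x, hx⟩ := nonempty_interior_of_iUnion_of_closed
    (fun n : ℕ => hlsc.isClosed_preimage (n : ℝ))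
    (iUnion_eq_univ_iff.2 fun x => exists_nat_ge (D.domRestrict f x))
  refine ⟨(↑) '' interior _, hD.isOpenMap_subtype_val _ isOpen_interior, ⟨x, x, hx, rfl⟩,
    by rintro _ ⟨y, -, rfl⟩; exact y.2, n, ?_⟩
  rintro _ ⟨_, ⟨y, hy, rfl⟩, rfl⟩
  exact (interior_subset hy : y ∈ D.domRestrict f ⁻¹' Iic (n : ℝ))

end Topological

section ConvexTVS

variable {X : Type*} [AddCommGroup X] [Module ℝ X] {D U : Set X} {f : X → ℝ} {z u w x₀ : X}
  {B t : ℝ}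

theorem convexOn_of_forall_linear_minorant (hD : Convex ℝ D)
    (h : ∀ z ∈ D, ∃ g : X →ₗ[ℝ] ℝ, ∀ x ∈ D, f z + g (x - z) ≤ f x) : ConvexOn ℝ D f := by
  refine ⟨hD, fun x hx y hy a b ha hb hab => ?_⟩
  set z := a • x + b • y
  obtain ⟨g, hg⟩ := h z (hD hx hy ha hb hab)
  have hzero : a • (x - z) + b • (y - z) = 0 :=
    calc a • (x - z) + b • (y - z) = z - (a + b) • z := by module
      _ = 0 := by rw [hab, one_smul, sub_self]
  have hg0 := congrArg g hzero
  rw [map_add, map_smul, map_smul, map_zero, smul_eq_mul, smul_eq_mul] at hg0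
  have hfz : a * f z + b * f z = f z := by rw [← add_mul, hab, one_mul]
  simp only [smul_eq_mul]
  nlinarith [mul_le_mul_of_nonneg_left (hg x hx) ha, mul_le_mul_of_nonneg_left (hg y hy) hb]

theorem ConvexOn.abs_add_smul_sub_le (hf : ConvexOn ℝ D f) (hzw : z + w ∈ D) (hzw' : z - w ∈ D)
    (hBw : f (z + w) ≤ B) (hBw' : f (z - w) ≤ B) (ht₀ : 0 ≤ t) (ht₁ : t ≤ 1) :
    |f (z + t • w) - f z| ≤ t * (B - f z) := by
  have hz : z ∈ D := by
    convert hf.1 hzw hzw' (by norm_num : (0 : ℝ) ≤ 1 / 2) (by norm_num : (0 : ℝ) ≤ 1 / 2)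
      (by norm_num) using 1
    module
  have hcomb : (1 - t) • z + t • (z + w) = z + t • w := by module
  have hzt : z + t • w ∈ D := hcomb ▸ hf.1 hz hzw (by linarith) ht₀ (by ring)
  have hup := hcomb ▸ hf.2 hz hzw (by linarith) ht₀ (by ring)
  have h1t : 0 < 1 + t := by linarith
  -- the lower bound: `z` is a convex combination of `z + t • w` and `z - w`
  have hlow := hf.2 hzt hzw' (by positivity : 0 ≤ 1 / (1 + t)) (by positivity : 0 ≤ t / (1 + t))
    (by field_simp)
  rw [show (1 / (1 + t)) • (z + t • w) + (t / (1 + t)) • (z - w) = z by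
    match_scalars
    · field_simp
    · field_simp; ring] at hlow
  simp only [smul_eq_mul] at hup hlow
  have hlow' := mul_le_mul_of_nonneg_left hlow h1t.le
  rw [mul_add, ← mul_assoc, ← mul_assoc, mul_one_div_cancel h1t.ne', mul_div_cancel₀ _ h1t.ne',
    one_mul] at hlow'
  rw [abs_sub_le_iff]
  constructor <;> nlinarith

variable [TopologicalSpace X] [IsTopologicalAddGroup X] [ContinuousSMul ℝ X]

theorem eventually_add_inv_two_pow_smul_mem (hD : D ∈ 𝓝 x₀) (x : X) :
    ∀ᶠ k : ℕ in atTop, x₀ + ((2 : ℝ) ^ k)⁻¹ • x ∈ D := by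
  have h : Tendsto (fun k : ℕ => x₀ + ((2 : ℝ) ^ k)⁻¹ • x) atTop (𝓝 x₀) := by
    simpa using tendsto_const_nhds.add ((tendsto_inv_atTop_zero.comp
      (tendsto_pow_atTop_atTop_of_one_lt (one_lt_two : (1 : ℝ) < 2))).smul_const x)
  exact h.eventually hD

theorem ConvexOn.continuousAt_of_isBoundedUnder (hf : ConvexOn ℝ D f) (hD : D ∈ 𝓝 z)
    (hb : (𝓝 z).IsBoundedUnder (· ≤ ·) f) : ContinuousAt f z := by
  obtain ⟨B, hB⟩ := hb
  have hO : ∀ᶠ x in 𝓝 z, x ∈ D ∧ f x ≤ B := Filter.Eventually.and hD hB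
  have hW : ∀ᶠ w in 𝓝 (0 : X), (z + w ∈ D ∧ f (z + w) ≤ B) ∧ (z - w ∈ D ∧ f (z - w) ≤ B) :=
    (((continuous_const.add continuous_id).tendsto' 0 z (add_zero z)).eventually hO).and
      (((continuous_const.sub continuous_id).tendsto' 0 z (sub_zero z)).eventually hO)
  have hBz : 0 ≤ B - f z := sub_nonneg.2 hO.self_of_nhds.2
  rw [ContinuousAt, Metric.tendsto_nhds]
  intro ε hε
  obtain ⟨c, hc, hcε⟩ := exists_pos_mul_lt hε (B - f z)
  set t := min c 1
  have ht : 0 < t := lt_min hc one_pos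
  have htε : t * (B - f z) < ε := by
    nlinarith [mul_le_mul_of_nonneg_right (min_le_left c 1) hBz]
  have hshrink : Tendsto (fun x => t⁻¹ • (x - z)) (𝓝 z) (𝓝 0) :=
    ((continuous_const_smul t⁻¹).comp (continuous_sub_right z)).tendsto' z 0 (by simp)
  filter_upwards [hshrink.eventually hW] with x ⟨⟨hzw, hBw⟩, hzw', hBw'⟩
  have hx : z + t • (t⁻¹ • (x - z)) = x := by rw [smul_inv_smul₀ ht.ne']; abel
  rw [Real.dist_eq, ← hx]
  exact (hf.abs_add_smul_sub_le hzw hzw' hBw hBw' ht.le (min_le_right c 1)).trans_lt htε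

/-- A bound on an open set `U` spreads to every `z ∈ D` through the homothety centred at a point
beyond `z` on the ray from `u ∈ U`, which maps `u` to `z`. -/
theorem ConvexOn.isBoundedUnder_of_bddAbove (hf : ConvexOn ℝ D f) (hD : IsOpen D)
    (hU : IsOpen U) (hUD : U ⊆ D) (hu : u ∈ U) (hb : BddAbove (f '' U)) (hz : z ∈ D) :
    (𝓝 z).IsBoundedUnder (· ≤ ·) f := by
  obtain ⟨M, hM⟩ := hb
  have hray : ∀ᶠ δ in 𝓝[>] (0 : ℝ), z + δ • (z - u) ∈ D := nhdsWithin_le_nhds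
    (((continuous_const.add (continuous_id.smul continuous_const)).tendsto' 0 z
      (by simp)).eventually (hD.mem_nhds hz))
  obtain ⟨δ, hδD, hδ⟩ := (hray.and self_mem_nhdsWithin).exists
  set z' := z + δ • (z - u)
  have hδ' : 0 < 1 + δ := by linarith
  obtain ⟨s, hs₀, hs₁, hsδ⟩ : ∃ s : ℝ, 0 < s ∧ s ≤ 1 ∧ s * (1 + δ) = δ :=
    ⟨δ / (1 + δ), div_pos hδ hδ', (div_le_one hδ').2 (by linarith), div_mul_cancel₀ _ hδ'.ne'⟩
  have hh (v : X) : AffineMap.homothety z' s v = (1 - s) • z' + s • v := by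
    rw [AffineMap.homothety_apply, vsub_eq_sub, vadd_eq_add]
    module
  have hhu : AffineMap.homothety z' s u = z := by
    rw [hh]
    match_scalars
    · linear_combination -hsδ
    · linear_combination hsδ
  refine ⟨(1 - s) * f z' + s * M, ?_⟩
  rw [eventually_map, ← hhu]
  filter_upwards [(AffineMap.homothety_isOpenMap z' s hs₀.ne').image_mem_nhds (hU.mem_nhds hu)]
  rintro _ ⟨v, hv, rfl⟩
  rw [hh]
  have : f ((1 - s) • z' + s • v) ≤ (1 - s) • f z' + s • f v :=
    hf.2 hδD (hUD hv) (by linarith) hs₀.le (by ring)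
  simp only [smul_eq_mul] at this
  nlinarith [hM (mem_image_of_mem f hv)]

theorem ConvexOn.continuousOn_of_bddAbove (hf : ConvexOn ℝ D f) (hD : IsOpen D) (hU : IsOpen U)
    (hUne : U.Nonempty) (hUD : U ⊆ D) (hb : BddAbove (f '' U)) : ContinuousOn f D :=
  fun _ hz => (hf.continuousAt_of_isBoundedUnder (hD.mem_nhds hz)
    (hf.isBoundedUnder_of_bddAbove hD hU hUD hUne.some_mem hb hz)).continuousWithinAt

end ConvexTVS

/-- In a topological vector space over `ℝ` which is a Baire space, the Kuczma–Ger classes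
`𝓐_X` and `𝓑_X` coincide: a set `A` makes every mid-convex function, defined on an open
convex set containing `A` and bounded above on `A`, continuous if and only if it makes every
additive functional bounded above on `A` continuous. -/
theorem statement19 {X : Type*} [TopologicalSpace X] [AddCommGroup X] [Module ℝ X]
    [IsTopologicalAddGroup X] [ContinuousSMul ℝ X] [BaireSpace X] (A : Set X) :
    (∀ (D : Set X) (f : X → ℝ), IsOpen D → Convex ℝ D → A ⊆ D →
      (∀ x ∈ D, ∀ y ∈ D, f (((1 : ℝ) / 2) • (x + y)) ≤ (f x + f y) / 2) →
      BddAbove (f '' A) → ContinuousOn f D) ↔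
    (∀ f : X → ℝ, (∀ x y : X, f (x + y) = f x + f y) → BddAbove (f '' A) → Continuous f) := by
  refine ⟨fun hA f hadd hbdd => ?_, fun hB D f hDo hDc hAD hmid hbdd => ?_⟩
  · exact continuousOn_univ.1 (hA univ f isOpen_univ convex_univ (subset_univ A)
      (midConvexOn_of_map_add hadd) hbdd)
  rcases D.eq_empty_or_nonempty with rfl | hne
  · exact continuousOn_empty f
  have hsupp (z : X) (hz : z ∈ D) : ∃ g : X →L[ℝ] ℝ, ∀ x ∈ D, f z + g (x - z) ≤ f x := by
    obtain ⟨g, hg⟩ := MidConvexOn.exists_addMonoidHom_le hmid hDc hz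
      fun x => (eventually_add_inv_two_pow_smul_mem (hDo.mem_nhds hz) x).exists
    obtain ⟨M, hM⟩ := hbdd
    have hgA : BddAbove (g '' A) := ⟨M - f z + g z, forall_mem_image.2 fun a ha => by
      linarith [hg a (hAD ha), hM (mem_image_of_mem f ha), map_sub g a z]⟩
    exact ⟨g.toRealLinearMap (hB g g.map_add hgA), hg⟩
  have hconv : ConvexOn ℝ D f := convexOn_of_forall_linear_minorant hDc fun z hz =>
    let ⟨g, hg⟩ := hsupp z hz
    ⟨g, hg⟩
  have hlsc : LowerSemicontinuousOn f D := lowerSemicontinuousOn_of_forall_continuous_minorant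
    fun z hz =>
      let ⟨g, hg⟩ := hsupp z hz
      ⟨fun x => f z + g (x - z), by fun_prop, by simp, hg⟩
  obtain ⟨U, hU, hUne, hUD, hUb⟩ := hlsc.exists_isOpen_subset_bddAbove hDo hne
  exact hconv.continuousOn_of_bddAbove hDo hU hUne hUD hUb
end
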